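/- arXiv:2506.05277 — 10 statements merged into one kernel-verified Lean document; each statement's English description precedes it below -/
import Mathlib

section
/- For all integers k ≥ 3, the polynomial r^k − 2·r^{k−1} + 1 factors as (r − 1)·(r^{k−1} − r^{k−2} − ⋯ − r − 1), and the factor r^{k−1} − r^{k−2} − ⋯ − r − 1 has exactly one root of absolute value greater than 1, which is real and simple, while all its other roots have absolute value strictly less than 1. -/
open Polynomial

/-- The factor r^{k−1} − r^{k−2} − ⋯ − r − 1 over ℂ. -/
noncomputable def Q3 (k : ℕ) : Polynomial ℂ :=
  X ^ (k - 1) - ∑ i ∈ Finset.range (k - 1), X ^ i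

/-!
Write `n = k - 1` and `Q x = x ^ n - ∑ i < n, x ^ i`, so that `(x - 1) Q x = 1 - x ^ n (2 - x)`.
If `Q z = 0` and `r = ‖z‖ ≥ 1`, the triangle inequality gives `r ^ n ≤ ∑ i < n, r ^ i`, i.e.
`Q r ≤ 0`, while `r ^ n ‖2 - z‖ = 1` and `‖2 - z‖ ≥ 2 - r` give `(r - 1) Q r ≥ 0`. Hence
`‖2 - z‖ = 2 - ‖z‖`, which forces `z = r` to be a positive real root. Since `Q x / x ^ n` is
strictly increasing on `(0, ∞)`, `Q` has only one positive root `α`; it lies in `(1, 2)` because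
`Q 1 = 1 - n < 0 < 1 = Q 2`, and it is simple because `α Q' α = ∑ i < n, (n - i) α ^ i > 0`.
-/

open Finset

theorem sub_one_mul_pow_sub_geom_sum {R : Type*} [CommRing R] (x : R) (n : ℕ) :
    (x - 1) * (x ^ n - ∑ i ∈ range n, x ^ i) = x ^ (n + 1) - 2 * x ^ n + 1 := by
  linear_combination -geom_sum_mul x n

theorem exists_one_lt_pow_eq_geom_sum {n : ℕ} (hn : 2 ≤ n) :
    ∃ α : ℝ, 1 < α ∧ α ^ n = ∑ i ∈ range n, α ^ i := by
  set f : ℝ → ℝ := fun x ↦ x ^ n - ∑ i ∈ range n, x ^ i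
  have hf1 : f 1 = 1 - n := by simp [f]
  have hf2 : f 2 = 1 := by
    simp only [f]
    linear_combination sub_one_mul_pow_sub_geom_sum (2 : ℝ) n
  have hn' : (2 : ℝ) ≤ n := by exact_mod_cast hn
  obtain ⟨α, ⟨hα1, -⟩, hfα⟩ := intermediate_value_Icc (by norm_num : (1 : ℝ) ≤ 2)
    (by fun_prop : Continuous f).continuousOn (show (0 : ℝ) ∈ Set.Icc (f 1) (f 2) by
      rw [hf1, hf2]; constructor <;> linarith)
  refine ⟨α, lt_of_le_of_ne hα1 ?_, sub_eq_zero.mp hfα⟩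
  rintro rfl
  linarith

theorem geom_sum_lt_pow_of_pow_eq_geom_sum {n : ℕ} (hn : n ≠ 0) {r s : ℝ} (hr : 0 < r)
    (hrs : r < s) (h : r ^ n = ∑ i ∈ range n, r ^ i) : ∑ i ∈ range n, s ^ i < s ^ n := by
  have termwise : ∀ i ∈ range n, s ^ i * r ^ n < s ^ n * r ^ i := by
    intro i hi
    obtain ⟨j, rfl⟩ := Nat.exists_eq_add_of_lt (mem_range.mp hi)
    have hsr : r ^ (j + 1) < s ^ (j + 1) := pow_lt_pow_left₀ hrs hr.le (Nat.succ_ne_zero j)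
    calc s ^ i * r ^ (i + j + 1) = s ^ i * r ^ i * r ^ (j + 1) := by ring
      _ < s ^ i * r ^ i * s ^ (j + 1) :=
        mul_lt_mul_of_pos_left hsr (mul_pos (pow_pos (hr.trans hrs) i) (pow_pos hr i))
      _ = s ^ (i + j + 1) * r ^ i := by ring
  have : (∑ i ∈ range n, s ^ i) * r ^ n < s ^ n * r ^ n := by
    calc (∑ i ∈ range n, s ^ i) * r ^ n = ∑ i ∈ range n, s ^ i * r ^ n := sum_mul _ _ _
      _ < ∑ i ∈ range n, s ^ n * r ^ i :=
        sum_lt_sum_of_nonempty (nonempty_range_iff.mpr hn) termwise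
      _ = s ^ n * r ^ n := by rw [← mul_sum, ← h]
  exact lt_of_mul_lt_mul_right this (by positivity)

theorem eq_of_pow_eq_geom_sum {n : ℕ} (hn : n ≠ 0) {r s : ℝ} (hr : 0 < r) (hs : 0 < s)
    (hr' : r ^ n = ∑ i ∈ range n, r ^ i) (hs' : s ^ n = ∑ i ∈ range n, s ^ i) : r = s := by
  rcases lt_trichotomy r s with hrs | hrs | hrs
  · exact absurd hs' (geom_sum_lt_pow_of_pow_eq_geom_sum hn hr hrs hr').ne'
  · exact hrs
  · exact absurd hr' (geom_sum_lt_pow_of_pow_eq_geom_sum hn hs hrs hs').ne'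

theorem Complex.eq_norm_of_norm_sub_eq {a : ℝ} (ha : 0 < a) {z : ℂ} (h : ‖a - z‖ = a - ‖z‖) :
    z = ‖z‖ := by
  have hsq : ‖(a : ℂ) - z‖ ^ 2 = (a - ‖z‖) ^ 2 := by rw [h]
  have hz : ‖z‖ ^ 2 = z.re ^ 2 + z.im ^ 2 := by rw [Complex.sq_norm, normSq_apply]; ring
  rw [Complex.sq_norm, normSq_apply] at hsq
  simp only [sub_re, sub_im, ofReal_re, ofReal_im] at hsq
  have hre : z.re = ‖z‖ := by nlinarith
  rw [← hre]
  exact eq_re_of_ofReal_le (re_eq_norm.mp hre)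

theorem Complex.eq_norm_of_pow_eq_geom_sum {n : ℕ} {z : ℂ} (hz : z ^ n = ∑ i ∈ range n, z ^ i)
    (h1 : 1 ≤ ‖z‖) : z = ‖z‖ := by
  set r := ‖z‖
  have hle : r ^ n ≤ ∑ i ∈ range n, r ^ i := by
    calc r ^ n = ‖∑ i ∈ range n, z ^ i‖ := by rw [← hz, norm_pow]
      _ ≤ ∑ i ∈ range n, ‖z ^ i‖ := norm_sum_le _ _
      _ = ∑ i ∈ range n, r ^ i := by simp only [norm_pow, r]
  have hnorm : r ^ n * ‖2 - z‖ = 1 := by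
    have := sub_one_mul_pow_sub_geom_sum z n
    rw [sub_eq_zero.mpr hz, mul_zero] at this
    have hz2 : z ^ n * (2 - z) = 1 := by linear_combination this
    simpa [r] using congrArg (‖·‖) hz2
  have hreal := sub_one_mul_pow_sub_geom_sum r n
  have hlower : 2 - r ≤ ‖2 - z‖ := by simpa [r] using norm_sub_norm_le (2 : ℂ) z
  have hrn : 0 < r ^ n := by positivity
  have hupper : 1 ≤ r ^ n * (2 - r) := by
    rw [pow_succ] at hreal
    nlinarith [mul_nonpos_of_nonneg_of_nonpos (sub_nonneg.mpr h1) (sub_nonpos.mpr hle)]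
  have : ‖(2 : ℝ) - z‖ = 2 - r := by
    push_cast
    exact le_antisymm (le_of_mul_le_mul_left (by linarith) hrn) hlower
  exact Complex.eq_norm_of_norm_sub_eq two_pos this

theorem pow_sub_geom_sum_ne_zero {R : Type*} [CommRing R] [Nontrivial R] (n : ℕ) :
    (X ^ n - ∑ i ∈ range n, X ^ i : R[X]) ≠ 0 := by
  intro h
  have h2 := sub_one_mul_pow_sub_geom_sum (2 : R) n
  have heval := congrArg (eval 2) h
  simp only [eval_sub, eval_pow, eval_X, eval_finsetSum, eval_zero] at heval
  rw [heval, mul_zero] at h2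
  exact zero_ne_one (α := R) (by linear_combination h2)

theorem mem_roots_pow_sub_geom_sum {R : Type*} [CommRing R] [IsDomain R] {n : ℕ} {z : R} :
    z ∈ (X ^ n - ∑ i ∈ range n, X ^ i : R[X]).roots ↔ z ^ n = ∑ i ∈ range n, z ^ i := by
  rw [mem_roots (pow_sub_geom_sum_ne_zero n), IsRoot, eval_sub, sub_eq_zero]
  simp only [eval_pow, eval_X, eval_finsetSum]

theorem mul_eval_derivative_pow_sub_geom_sum {R : Type*} [CommRing R] (x : R) (n : ℕ) :
    x * eval x (derivative (X ^ n - ∑ i ∈ range n, X ^ i : R[X])) =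
      n * x ^ n - ∑ i ∈ range n, (i : R) * x ^ i := by
  have mul_pow_pred (i : ℕ) : x * ((i : R) * x ^ (i - 1)) = i * x ^ i := by
    rcases i with _ | i
    · simp
    · rw [Nat.add_sub_cancel, pow_succ]; ring
  simp only [derivative_sub, derivative_sum, derivative_X_pow, eval_sub, eval_finsetSum,
    eval_mul, eval_C, eval_pow, eval_X, mul_sub, mul_sum, mul_pow_pred]

theorem rootMultiplicity_ofReal_pow_sub_geom_sum {n : ℕ} (hn : n ≠ 0) {α : ℝ} (hα : 0 < α)
    (h : α ^ n = ∑ i ∈ range n, α ^ i) :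
    rootMultiplicity (α : ℂ) (X ^ n - ∑ i ∈ range n, X ^ i : ℂ[X]) = 1 := by
  have hQ := pow_sub_geom_sum_ne_zero (R := ℂ) n
  have hroot : (X ^ n - ∑ i ∈ range n, X ^ i : ℂ[X]).IsRoot α := by
    rw [← mem_roots hQ, mem_roots_pow_sub_geom_sum]
    exact_mod_cast h
  have hpos : 0 < (n : ℝ) * α ^ n - ∑ i ∈ range n, (i : ℝ) * α ^ i := by
    rw [h, mul_sum, ← sum_sub_distrib]
    refine sum_pos (fun i hi ↦ ?_) (nonempty_range_iff.mpr hn)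
    have : (i : ℝ) < n := by exact_mod_cast mem_range.mp hi
    rw [← sub_mul]
    exact mul_pos (by linarith) (pow_pos hα i)
  have hderiv : ¬ (derivative (X ^ n - ∑ i ∈ range n, X ^ i : ℂ[X])).IsRoot α := by
    intro hd
    have := mul_eval_derivative_pow_sub_geom_sum (α : ℂ) n
    rw [hd.eq_zero, mul_zero] at this
    exact hpos.ne' (by exact_mod_cast this.symm)
  have := (one_lt_rootMultiplicity_iff_isRoot hQ).not.mpr (fun h ↦ hderiv h.2)
  have := (rootMultiplicity_pos hQ).mpr hroot
  omega

/-- For k ≥ 3, r^k − 2r^{k−1} + 1 = (r − 1)(r^{k−1} − r^{k−2} − ⋯ − r − 1), and the second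
factor has exactly one root of absolute value > 1, which is real and simple, while all
its other roots have absolute value < 1. -/
theorem stmt3 (k : ℕ) (hk : 3 ≤ k) :
    (X ^ k - C 2 * X ^ (k - 1) + 1 : Polynomial ℂ) = (X - 1) * Q3 k ∧
    ∃ α : ℝ, 1 < α ∧ (α : ℂ) ∈ (Q3 k).roots ∧ (Q3 k).roots.count (α : ℂ) = 1 ∧
      (∀ z ∈ (Q3 k).roots, 1 < ‖z‖ → z = (α : ℂ)) ∧
      (∀ z ∈ (Q3 k).roots, z ≠ (α : ℂ) → ‖z‖ < 1) := by
  obtain ⟨n, rfl⟩ : ∃ n, k = n + 1 := ⟨k - 1, by omega⟩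
  have hQ : Q3 (n + 1) = X ^ n - ∑ i ∈ range n, X ^ i := by rw [Q3, Nat.add_sub_cancel]
  obtain ⟨α, hα1, hα⟩ := exists_one_lt_pow_eq_geom_sum (n := n) (by omega)
  have large_root : ∀ z ∈ (Q3 (n + 1)).roots, 1 ≤ ‖z‖ → z = α := by
    intro z hz h1
    rw [hQ, mem_roots_pow_sub_geom_sum] at hz
    have hz_real := Complex.eq_norm_of_pow_eq_geom_sum hz h1
    rw [hz_real] at hz ⊢
    exact congrArg _ (eq_of_pow_eq_geom_sum (by omega) (by linarith) (by linarith)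
      (by exact_mod_cast hz) hα)
  refine ⟨?_, α, hα1, ?_, ?_, fun z hz h1 ↦ large_root z hz h1.le,
    fun z hz hne ↦ lt_of_not_ge fun h1 ↦ hne (large_root z hz h1)⟩
  · rw [hQ, sub_one_mul_pow_sub_geom_sum, Nat.add_sub_cancel, C_ofNat]
  · rw [hQ, mem_roots_pow_sub_geom_sum]
    exact_mod_cast hα
  · rw [count_roots, hQ]
    exact rootMultiplicity_ofReal_pow_sub_geom_sum (by omega) (by linarith) hα
end

section
/- For k ≥ 3, the polynomial χ(r) = r^{k−1} − r^{k−2} − ⋯ − r − 1 is the unique monic integer polynomial of degree k−1 having the largest real root of χ as a root. -/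
open Polynomial

/-- χ(r) = r^{k−1} − (r^{k−2} + ⋯ + r + 1) as a monic integer polynomial. -/
noncomputable def chi4 (k : ℕ) : Polynomial ℤ :=
  X ^ (k - 1) - ∑ i ∈ Finset.range (k - 1), X ^ i

/-!
`chi4 (n + 1) = X ^ n - (X ^ (n - 1) + ⋯ + 1)` is a Pisot polynomial. Multiplying by `X - 1`, a
root `z` satisfies `z ^ n * (2 - z) = 1`; if `‖z‖ ≥ 1`, the bound `‖z‖ ^ n ≤ ∑ ‖z‖ ^ i` forces
equality in `‖z‖ + ‖2 - z‖ ≥ 2`, so `z` is a positive real. Dividing by `x ^ n` shows that the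
positive root `α` is unique, and it is simple. Hence if `chi4 (n + 1) = minpoly ℤ α * g`, the
monic integer polynomial `g` has all its complex roots in the open unit disc while `g(0) = ±1`, so
`g = 1`.
-/

theorem Polynomial.Monic.natDegree_eq_zero_of_norm_roots_lt_one {p : ℂ[X]} (hp : p.Monic)
    (h0 : 1 ≤ ‖p.coeff 0‖) (hroots : ∀ z ∈ p.roots, ‖z‖ < 1) : p.natDegree = 0 := by
  by_contra hdeg
  have hsplit := IsAlgClosed.splits p
  obtain ⟨z, hz⟩ : ∃ z, z ∈ p.roots := by
    refine Multiset.exists_mem_of_ne_zero fun h => hdeg ?_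
    rw [hsplit.natDegree_eq_card_roots, h, Multiset.card_zero]
  obtain ⟨s, hs⟩ := Multiset.exists_cons_of_mem hz
  have hs_le : (s.map (‖·‖)).prod ≤ 1 := by
    simpa using Multiset.prod_map_le_prod_map₀ (‖·‖) (fun _ => (1 : ℝ))
      (fun _ _ => norm_nonneg _) fun w hw => (hroots w (hs ▸ Multiset.mem_cons_of_mem hw)).le
  have : ‖p.coeff 0‖ < 1 := by
    calc ‖p.coeff 0‖ = (p.roots.map (‖·‖)).prod := by
          rw [hsplit.coeff_zero_eq_prod_roots_of_monic hp, norm_mul, norm_pow, norm_neg, norm_one,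
            one_pow, one_mul]
          exact map_multiset_prod (normHom : ℂ →*₀ ℝ) _
      _ = ‖z‖ * (s.map (‖·‖)).prod := by rw [hs, Multiset.map_cons, Multiset.prod_cons]
      _ ≤ ‖z‖ * 1 := by gcongr
      _ < 1 := by simpa using hroots z hz
  linarith

section chi4

variable {n : ℕ}

@[simp]
theorem aeval_chi4_succ {R : Type*} [CommRing R] (x : R) :
    aeval x (chi4 (n + 1)) = x ^ n - ∑ i ∈ Finset.range n, x ^ i := by
  simp [chi4]

theorem degree_sum_range_X_pow_lt {R : Type*} [Semiring R] [Nontrivial R] :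
    (∑ i ∈ Finset.range n, (X : R[X]) ^ i).degree < n := by
  refine (degree_sum_le _ _).trans_lt ((Finset.sup_lt_iff (WithBot.bot_lt_coe _)).mpr ?_)
  intro i hi
  rw [degree_X_pow]
  exact_mod_cast Finset.mem_range.mp hi

theorem monic_chi4_succ : (chi4 (n + 1)).Monic :=
  monic_X_pow_sub degree_sum_range_X_pow_lt

theorem natDegree_chi4_succ : (chi4 (n + 1)).natDegree = n := by
  refine natDegree_eq_of_degree_eq_some ?_
  rw [chi4, Nat.add_sub_cancel, degree_sub_eq_left_of_degree_lt] <;>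
    rw [degree_X_pow]
  exact degree_sum_range_X_pow_lt

theorem isUnit_coeff_zero_chi4_succ : IsUnit ((chi4 (n + 1)).coeff 0) := by
  cases n <;> simp [chi4, coeff_X_pow]

theorem pow_mul_two_sub_eq_one_of_aeval_chi4 {R : Type*} [CommRing R] {x : R}
    (hx : aeval x (chi4 (n + 1)) = 0) : x ^ n * (2 - x) = 1 := by
  rw [aeval_chi4_succ] at hx
  linear_combination (1 - x) * hx - geom_sum_mul x n

/- `chi4 (n + 1) (x) / x ^ n = 1 - ∑_{j=1}^{n} x⁻ʲ` is strictly increasing on `x > 0`; cleared of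
denominators this reads as follows. -/
theorem aeval_chi4_pos_of_lt {a b : ℝ} (ha : 0 < a) (hab : a < b)
    (hroot : aeval a (chi4 (n + 1)) = 0) : 0 < aeval b (chi4 (n + 1)) := by
  rcases n.eq_zero_or_pos with rfl | hn
  · simp
  have key : a ^ n * aeval b (chi4 (n + 1)) - b ^ n * aeval a (chi4 (n + 1)) =
      ∑ i ∈ Finset.range n, (a * b) ^ i * (b ^ (n - i) - a ^ (n - i)) := by
    calc _ = ∑ i ∈ Finset.range n, (b ^ n * a ^ i - a ^ n * b ^ i) := by
          rw [Finset.sum_sub_distrib, ← Finset.mul_sum, ← Finset.mul_sum, aeval_chi4_succ,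
            aeval_chi4_succ]
          ring
      _ = _ := Finset.sum_congr rfl fun i hi => by
          obtain ⟨j, rfl⟩ := Nat.exists_eq_add_of_lt (Finset.mem_range.mp hi)
          rw [show i + j + 1 - i = j + 1 by omega]
          ring
  have hpos : 0 < ∑ i ∈ Finset.range n, (a * b) ^ i * (b ^ (n - i) - a ^ (n - i)) := by
    refine Finset.sum_pos (fun i hi => ?_) (Finset.nonempty_range_iff.mpr hn.ne')
    have : a ^ (n - i) < b ^ (n - i) :=
      pow_lt_pow_left₀ hab ha.le (by simp at hi; omega)
    have : 0 < a * b := by nlinarith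
    positivity
  rw [hroot, mul_zero, sub_zero] at key
  exact pos_of_mul_pos_right (key ▸ hpos) (pow_nonneg ha.le n)

theorem eq_of_aeval_chi4_eq_zero {a b : ℝ} (ha : 0 < a) (hb : 0 < b)
    (hra : aeval a (chi4 (n + 1)) = 0) (hrb : aeval b (chi4 (n + 1)) = 0) : a = b := by
  rcases lt_trichotomy a b with h | h | h
  · exact absurd hrb (aeval_chi4_pos_of_lt ha h hra).ne'
  · exact h
  · exact absurd hra (aeval_chi4_pos_of_lt hb h hrb).ne'

/- At a root, `x * χ'(x) = n * χ(x) + ∑_{i<n} (n - i) x ^ i` is a sum of positive terms. -/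
theorem aeval_derivative_chi4_pos {x : ℝ} (hx : 0 < x) (hroot : aeval x (chi4 (n + 1)) = 0) :
    0 < aeval x (derivative (chi4 (n + 1))) := by
  rcases n.eq_zero_or_pos with rfl | hn
  · simp at hroot
  have hterm : ∀ i : ℕ, x * (i * x ^ (i - 1)) = i * x ^ i := by
    rintro (_ | i) <;> simp [pow_succ]
    ring
  have hxn : x ^ n = ∑ i ∈ Finset.range n, x ^ i := by simpa [sub_eq_zero] using hroot
  have key : x * aeval x (derivative (chi4 (n + 1))) =
      ∑ i ∈ Finset.range n, ((n : ℝ) - i) * x ^ i := by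
    simp only [chi4, Nat.add_sub_cancel, derivative_X_pow, map_sub, map_sum, map_mul,
      map_natCast, map_pow, aeval_X, mul_sub, Finset.mul_sum, hterm, sub_mul,
      Finset.sum_sub_distrib, hxn]
  have hpos : 0 < ∑ i ∈ Finset.range n, ((n : ℝ) - i) * x ^ i := by
    refine Finset.sum_pos (fun i hi => ?_) (Finset.nonempty_range_iff.mpr hn.ne')
    have : (i : ℝ) < n := by exact_mod_cast Finset.mem_range.mp hi
    have : 0 < (n : ℝ) - i := by linarith
    positivity
  exact pos_of_mul_pos_right (key ▸ hpos) hx.le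

theorem exists_ofReal_of_aeval_chi4_eq_zero {z : ℂ} (hz : aeval z (chi4 (n + 1)) = 0)
    (hnorm : 1 ≤ ‖z‖) : ∃ b : ℝ, 0 ≤ b ∧ z = b := by
  set t := ‖z‖
  have ht : 0 < t ^ n := by positivity
  have hprod : t ^ n * ‖2 - z‖ = 1 := by
    simpa using congrArg (‖·‖) (pow_mul_two_sub_eq_one_of_aeval_chi4 hz)
  have hsum : t ^ n ≤ ∑ i ∈ Finset.range n, t ^ i := by
    rw [aeval_chi4_succ, sub_eq_zero] at hz
    calc t ^ n = ‖∑ i ∈ Finset.range n, z ^ i‖ := by rw [← hz, norm_pow]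
      _ ≤ ∑ i ∈ Finset.range n, t ^ i := by simpa using norm_sum_le (Finset.range n) (z ^ ·)
  have hle : t + ‖2 - z‖ ≤ 2 := by
    have : t ^ n * ‖2 - z‖ ≤ t ^ n * (2 - t) := by
      nlinarith [geom_sum_mul t n, mul_le_mul_of_nonneg_right hsum (sub_nonneg.mpr hnorm)]
    linarith [le_of_mul_le_mul_left this ht]
  have hray : SameRay ℝ z (2 - z) := by
    refine sameRay_iff_norm_add.mpr (le_antisymm (norm_add_le _ _) ?_)
    simpa using hle
  obtain ⟨r, hr, hrz⟩ := (by simpa using ((SameRay.refl z).add_right hray).symm :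
    SameRay ℝ (2 : ℂ) z).exists_nonneg_left two_ne_zero
  exact ⟨2 * r, by positivity, by rw [← hrz, Complex.real_smul]; push_cast; ring⟩

theorem eq_of_aeval_chi4_eq_zero_of_one_le_norm {α : ℝ} (hα : 0 < α)
    (hαroot : aeval α (chi4 (n + 1)) = 0) {z : ℂ} (hz : aeval z (chi4 (n + 1)) = 0)
    (hnorm : 1 ≤ ‖z‖) : z = α := by
  obtain ⟨b, hb, rfl⟩ := exists_ofReal_of_aeval_chi4_eq_zero hz hnorm
  have hbpos : 0 < b := by
    rw [Complex.norm_real, Real.norm_of_nonneg hb] at hnorm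
    linarith
  rw [eq_of_aeval_chi4_eq_zero hbpos hα ((aeval_algebraMap_eq_zero_iff ℂ b _).mp hz) hαroot]

theorem minpoly_eq_chi4 {α : ℝ} (hα : 0 < α) (hroot : aeval α (chi4 (n + 1)) = 0) :
    minpoly ℤ α = chi4 (n + 1) := by
  have hint : IsIntegral ℤ α := ⟨_, monic_chi4_succ, hroot⟩
  obtain ⟨g, hg⟩ := minpoly.isIntegrallyClosed_dvd hint hroot
  have hgmonic : g.Monic := (minpoly.monic hint).of_mul_monic_left (hg ▸ monic_chi4_succ)
  have hgα : aeval α g ≠ 0 := by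
    intro h
    have := aeval_derivative_chi4_pos hα hroot
    rw [hg, derivative_mul, map_add, map_mul, map_mul, minpoly.aeval, h] at this
    simp at this
  have hg0 : IsUnit (g.coeff 0) := by
    have := isUnit_coeff_zero_chi4_succ (n := n)
    rw [hg, mul_coeff_zero] at this
    exact isUnit_of_mul_isUnit_right this
  have hgdeg : g.natDegree = 0 := by
    rw [← hgmonic.natDegree_map (algebraMap ℤ ℂ)]
    refine (hgmonic.map _).natDegree_eq_zero_of_norm_roots_lt_one ?_ fun z hz => ?_
    · rcases Int.isUnit_iff.mp hg0 with h | h <;> simp [h]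
    · have hgz : aeval z g = 0 := (mem_aroots.mp hz).2
      by_contra! hnorm
      refine hgα ?_
      have hzα := eq_of_aeval_chi4_eq_zero_of_one_le_norm hα hroot
        (by rw [hg, map_mul, hgz, mul_zero]) hnorm
      rw [hzα] at hgz
      exact (aeval_algebraMap_eq_zero_iff ℂ α g).mp hgz
  rw [hg, hgmonic.natDegree_eq_zero.mp hgdeg, mul_one]

end chi4

theorem stmt4_general (k : ℕ) (hk : 3 ≤ k) (α : ℝ) (hα : 1 < α)
    (hroot : Polynomial.aeval α (chi4 k) = 0) :
    ∀ f : Polynomial ℤ, f.Monic → f.natDegree = k - 1 →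
      Polynomial.aeval α f = 0 → f = chi4 k := by
  intro f hf hdeg hfα
  obtain ⟨n, rfl⟩ : ∃ n, k = n + 1 := ⟨k - 1, by omega⟩
  have hint : IsIntegral ℤ α := ⟨_, monic_chi4_succ, hroot⟩
  have hmin := minpoly_eq_chi4 (by linarith) hroot
  rw [← hmin]
  refine eq_of_monic_of_dvd_of_natDegree_le (minpoly.monic hint) hf
    (minpoly.isIntegrallyClosed_dvd hint hfα) ?_
  rw [hdeg, hmin, natDegree_chi4_succ, Nat.add_sub_cancel]

/-- For k ≥ 3, χ is the unique monic integer polynomial of degree k−1 having the largest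
real root α of χ as a root. -/
theorem stmt4 (k : ℕ) (hk : 3 ≤ k) (α : ℝ) (hα : 1 < α)
    (hroot : Polynomial.aeval α (chi4 k) = 0)
    (hmax : ∀ β : ℝ, Polynomial.aeval β (chi4 k) = 0 → β ≤ α) :
    ∀ f : Polynomial ℤ, f.Monic → f.natDegree = k - 1 →
      Polynomial.aeval α f = 0 → f = chi4 k :=
  stmt4_general k hk α hα hroot
end

section
/- Let u be a σ-ary string of length k with no periods, and let L_u be the set of strings over the σ-letter alphabet avoiding u. Then for all n ≥ k, the number of strings of length n that contain u exactly once, as a suffix, equals |L_u ∩ Σ^{n−k}|. -/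
/-- The string u occurs in s at position i (0-based). -/
def occursAt {σ : ℕ} (s u : List (Fin σ)) (i : ℕ) : Prop :=
  i + u.length ≤ s.length ∧ (s.drop i).take u.length = u

lemma key_unique {σ k n : ℕ} (hk : 1 ≤ k) (hn : k ≤ n)
    (u : List (Fin σ)) (hlen : u.length = k)
    (hnp : ∀ p, 1 ≤ p → p < k → u.drop p ≠ u.take (k - p))
    (v : List (Fin σ)) (hv : v.length = n - k) (hinf : ¬ u <:+: v) :
    ∀ i, occursAt (v ++ u) u i → i = n - k := by
  intro i ⟨h1, h2⟩
  rw [hlen] at h1 h2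
  have hlen' : (v ++ u).length = n := by
    simp [hv, hlen, Nat.sub_add_cancel hn]
  rw [hlen'] at h1
  by_contra hne
  have hi : i < n - k := by
    rcases lt_or_gt_of_ne hne with h | h
    · exact h
    · omega
  by_cases hcase : i + k ≤ n - k
  · -- occurrence fully inside v
    have hdrop : (v ++ u).drop i = v.drop i ++ u :=
      List.drop_append_of_le_length (by omega)
    have htake : ((v ++ u).drop i).take k = (v.drop i).take k := by
      rw [hdrop]
      exact List.take_append_of_le_length (by simp [hv]; omega)
    apply hinf
    rw [← h2, htake]
    exact ((v.drop i).take_prefix k).isInfix.trans (v.drop_suffix i).isInfix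
  · -- overlapping occurrence gives a period
    set p := n - k - i with hp
    have hp1 : 1 ≤ p := by omega
    have hp2 : p < k := by omega
    apply hnp p hp1 hp2
    have hip : i + p = n - k := by omega
    have hsuf : (v ++ u).drop (n - k) = u := List.drop_left' hv
    calc u.drop p = (((v ++ u).drop i).take k).drop p := by rw [h2]
      _ = ((v ++ u).drop (n - k)).take (k - p) := by
          rw [List.drop_take, List.drop_drop, hip]
      _ = u.take (k - p) := by rw [hsuf]

/-- If a σ-ary k-mer u has no periods, then for all n ≥ k the number of σ-ary strings of
length n containing u exactly once, as a suffix, equals the number of strings of length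
n − k avoiding u. -/
theorem stmt7 (σ k n : ℕ) (hσ : 2 ≤ σ) (hk : 1 ≤ k) (hn : k ≤ n)
    (u : List (Fin σ)) (hlen : u.length = k)
    (hnp : ∀ p, 1 ≤ p → p < k → u.drop p ≠ u.take (k - p)) :
    Nat.card {s : List (Fin σ) // s.length = n ∧ u <:+ s ∧
      ∀ i, occursAt s u i → i = n - k}
    = Nat.card {v : List (Fin σ) // v.length = n - k ∧ ¬ u <:+: v} := by
  have hmap : ∀ s : {s : List (Fin σ) // s.length = n ∧ u <:+ s ∧
      ∀ i, occursAt s u i → i = n - k},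
      (s.1.take (n - k)).length = n - k ∧ ¬ u <:+: s.1.take (n - k) := by
    intro s
    obtain ⟨hslen, hsuf, huniq⟩ := s.2
    refine ⟨by rw [List.length_take, hslen]; omega, ?_⟩
    intro hinf
    obtain ⟨l, r, hlr⟩ := hinf
    have hjlen : l.length + k ≤ n - k := by
      have := congrArg List.length hlr
      simp [hlen] at this
      omega
    have hocc : occursAt s.1 u l.length := by
      constructor
      · rw [hlen, hslen]; omega
      · rw [hlen]
        have h1 : (s.1.take (n - k)).drop l.length = (l ++ u ++ r).drop l.length := by
          rw [hlr]
        rw [List.drop_take] at h1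
        have h2 : (l ++ u ++ r).drop l.length = u ++ r := by
          rw [List.append_assoc]
          exact List.drop_left' rfl
        rw [h2] at h1
        have : ((s.1.drop l.length).take (n - k - l.length)).take k
            = (u ++ r).take k := by rw [h1]
        rw [List.take_take, List.take_left' hlen] at this
        have hmin : k ⊓ (n - k - l.length) = k := by omega
        rw [hmin] at this
        exact this
    have := huniq l.length hocc
    omega
  apply Nat.card_eq_of_bijective (fun s => ⟨s.1.take (n - k), hmap s⟩)
  refine ⟨?_, ?_⟩
  · rintro ⟨s, hslen, hsuf, huniq⟩ ⟨t, htlen, htsuf, htuniq⟩ h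
    simp only [Subtype.mk.injEq] at h ⊢
    obtain ⟨s', rfl⟩ := hsuf
    obtain ⟨t', rfl⟩ := htsuf
    have hs' : s'.length = n - k := by simp [hlen] at hslen; omega
    have ht' : t'.length = n - k := by simp [hlen] at htlen; omega
    rw [List.take_append_of_le_length (by omega),
      List.take_append_of_le_length (by omega),
      List.take_of_length_le (by omega), List.take_of_length_le (by omega)] at h
    rw [h]
  · rintro ⟨v, hvlen, hvinf⟩
    refine ⟨⟨v ++ u, ?_, ⟨v, rfl⟩, key_unique hk hn u hlen hnp v hvlen hvinf⟩, ?_⟩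
    · simp [hvlen, hlen]; omega
    · simp only [Subtype.mk.injEq]
      rw [List.take_append_of_le_length (by omega),
        List.take_of_length_le (by omega)]
end

section
/- For every w ≥ 2, the minimizer on the binary alphabet with k = 2 defined by the order (01, 10, 00, 11) has density exactly (2^w + w + 5)/2^{w+2}. -/
/-- The 2-mer of a binary string l starting at position i. -/
def kmerAt (l : List Bool) (i : ℕ) : List Bool := (l.drop i).take 2

/-- A window l of length w+2 is charged w.r.t. a rank function on 2-mers if its minimal
2-mer is its prefix, or is its suffix and that suffix occurs nowhere else in l. -/
def Charged (rank : List Bool → ℕ) (w : ℕ) (l : List Bool) : Prop :=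
  (∀ i ≤ w, rank (kmerAt l 0) ≤ rank (kmerAt l i)) ∨
  ((∀ i ≤ w, rank (kmerAt l w) ≤ rank (kmerAt l i)) ∧ ∀ i < w, kmerAt l i ≠ kmerAt l w)

/-- The order (01, 10, 00, 11) on binary 2-mers. -/
def rank0 (u : List Bool) : ℕ :=
  if u = [false, true] then 0
  else if u = [true, false] then 1
  else if u = [false, false] then 2
  else 3

namespace Stmt8Aux

lemma getE {l : List Bool} {i : ℕ} (h : i < l.length) : l[i]! = l[i] := getElem!_pos l i h

lemma kmer_eq (l : List Bool) (i : ℕ) (h : i + 1 < l.length) :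
    kmerAt l i = [l[i]!, l[i+1]!] := by
  have h1 : l.drop i = l[i] :: l[i+1] :: l.drop (i+2) := by
    rw [List.drop_eq_getElem_cons (by omega : i < l.length)]
    congr 1
    rw [List.drop_eq_getElem_cons h]
  rw [getE (by omega), getE h]
  unfold kmerAt
  rw [h1]
  rfl

lemma ext_get! {l1 l2 : List Bool} (h : l1.length = l2.length)
    (h2 : ∀ i < l1.length, l1[i]! = l2[i]!) : l1 = l2 := by
  refine List.ext_getElem h (fun i hi1 hi2 => ?_)
  have := h2 i hi1
  rwa [getE hi1, getE hi2] at this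

lemma get!_cons_succ (a : Bool) (l : List Bool) (i : ℕ) : (a :: l)[i+1]! = l[i]! := by
  by_cases h : i < l.length
  · rw [getE (by simp; omega), getE h, List.getElem_cons_succ]
  · rw [getElem!_neg (a :: l) (i+1) (by simp; omega), getElem!_neg l i h]

lemma get!_cons_zero (a : Bool) (l : List Bool) : (a :: l)[0]! = a := by
  rw [getE (by simp)]; rfl

lemma get!_replicate {b : Bool} {n i : ℕ} (h : i < n) : (List.replicate n b)[i]! = b := by
  rw [getE (by simpa using h)]; exact List.getElem_replicate ..

lemma get!_append_lt (l1 l2 : List Bool) {i : ℕ} (h : i < l1.length) :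
    (l1 ++ l2)[i]! = l1[i]! := by
  rw [getE (by simp; omega), getE h]; exact List.getElem_append_left h

lemma get!_append_ge (l1 l2 : List Bool) {i : ℕ} (h : l1.length ≤ i) :
    (l1 ++ l2)[i]! = l2[i - l1.length]! := by
  by_cases h2 : i < l1.length + l2.length
  · rw [getE (by simp; omega), getE (by omega)]
    exact List.getElem_append_right h
  · rw [getElem!_neg (l1 ++ l2) i (by simp; omega), getElem!_neg l2 _ (by omega)]

/-- propagation of `false` forward when there is no `01` k-mer in range. -/
lemma prop_false (l : List Bool) (m : ℕ)
    (h : ∀ i < m, ¬(l[i]! = false ∧ l[i+1]! = true)) :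
    ∀ j ≤ m, ∀ i ≤ j, l[i]! = false → l[j]! = false := by
  intro j
  induction j with
  | zero =>
    intro _ i hi hf
    have : i = 0 := by omega
    subst this; exact hf
  | succ j ih =>
    intro hj i hi hf
    rcases Nat.lt_or_ge i (j+1) with h1 | h1
    · have hjf := ih (by omega) i (by omega) hf
      have := h j (by omega)
      cases hb : l[j+1]! with
      | false => rfl
      | true => exact absurd ⟨hjf, hb⟩ this
    · have : i = j+1 := by omega
      subst this; exact hf

/-- propagation of `true` forward when there is no `10` k-mer in range. -/
lemma prop_true (l : List Bool) (m : ℕ)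
    (h : ∀ i < m, ¬(l[i]! = true ∧ l[i+1]! = false)) :
    ∀ j ≤ m, ∀ i ≤ j, l[i]! = true → l[j]! = true := by
  intro j
  induction j with
  | zero =>
    intro _ i hi hf
    have : i = 0 := by omega
    subst this; exact hf
  | succ j ih =>
    intro hj i hi hf
    rcases Nat.lt_or_ge i (j+1) with h1 | h1
    · have hjf := ih (by omega) i (by omega) hf
      have := h j (by omega)
      cases hb : l[j+1]! with
      | true => rfl
      | false => exact absurd ⟨hjf, hb⟩ this
    · have : i = j+1 := by omega
      subst this; exact hf

/-- canonical "ends in unique 01" list: 1^a 0^(w+1-a) 1 -/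
def cB (w a : ℕ) : List Bool :=
  List.replicate a true ++ (List.replicate (w+1-a) false ++ [true])

lemma cB_length {w a : ℕ} (ha : a ≤ w) : (cB w a).length = w + 2 := by
  simp [cB]; omega

lemma cB_get {w a : ℕ} (ha : a ≤ w) {j : ℕ} (hj : j < w + 2) :
    (cB w a)[j]! = true ↔ (j < a ∨ j = w + 1) := by
  unfold cB
  rcases Nat.lt_or_ge j a with h1 | h1
  · rw [get!_append_lt _ _ (by simpa using h1), get!_replicate h1]
    simp [h1]
  · rw [get!_append_ge _ _ (by simpa using h1)]
    simp only [List.length_replicate]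
    rcases Nat.lt_or_ge (j - a) (w + 1 - a) with h2 | h2
    · rw [get!_append_lt _ _ (by simpa using h2), get!_replicate h2]
      simp; omega
    · rw [get!_append_ge _ _ (by simpa using h2)]
      simp only [List.length_replicate]
      have he : j - a - (w + 1 - a) = 0 := by omega
      rw [he, get!_cons_zero]
      simp; omega

lemma c1_get {w j : ℕ} (hj : j < w + 2) :
    (true :: List.replicate (w+1) false)[j]! = true ↔ j = 0 := by
  cases j with
  | zero => simp [get!_cons_zero]
  | succ j =>
    rw [get!_cons_succ, get!_replicate (show j < w + 1 by omega)]
    simp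

lemma c2_get {w j : ℕ} (hj : j < w + 2) :
    (List.replicate (w+1) true ++ [false])[j]! = true ↔ j < w + 1 := by
  rcases Nat.lt_or_ge j (w+1) with h1 | h1
  · rw [get!_append_lt _ _ (by simpa using h1), get!_replicate h1]
    simp [h1]
  · rw [get!_append_ge _ _ (by simpa using h1)]
    simp only [List.length_replicate]
    have he : j - (w+1) = 0 := by omega
    rw [he, get!_cons_zero]
    simp; omega

end Stmt8Aux
namespace Stmt8Aux

lemma bfalse {b : Bool} (h : ¬ b = true) : b = false := by
  cases b
  · rfl
  · exact absurd rfl h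

lemma rank0_ge_one {a b : Bool} (h : 1 ≤ rank0 [a, b]) : ¬(a = false ∧ b = true) := by
  rintro ⟨rfl, rfl⟩
  simp [rank0] at h

lemma rank0_ge_two {a b : Bool} (h : 2 ≤ rank0 [a, b]) : a = b := by
  cases a <;> cases b <;> simp_all [rank0]

lemma rank0_ge_three {a b : Bool} (h : 3 ≤ rank0 [a, b]) : a = true ∧ b = true := by
  cases a <;> cases b <;> simp_all [rank0]

lemma forward {w : ℕ} (hw : 2 ≤ w) {l : List Bool} (hl : l.length = w + 2)
    (hc : Charged rank0 w l) :
    (∃ t, t.length = w ∧ l = false :: true :: t) ∨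
    (∃ a ≤ w, l = cB w a) ∨
    l = true :: List.replicate (w+1) false ∨
    l = List.replicate (w+1) true ++ [false] ∨
    l = List.replicate (w+2) false ∨
    l = List.replicate (w+2) true := by
  have hk : ∀ i ≤ w, kmerAt l i = [l[i]!, l[i+1]!] := fun i hi => kmer_eq l i (by omega)
  rcases hc with hA | ⟨hB, hU⟩
  · -- prefix minimal
    have hA' : ∀ i ≤ w, rank0 [l[0]!, l[1]!] ≤ rank0 [l[i]!, l[i+1]!] := by
      intro i hi
      have := hA i hi
      rwa [hk 0 (by omega), hk i hi] at this
    cases h0 : l[0]! <;> cases h1 : l[1]!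
    · -- 00 : all zero
      right; right; right; right; left
      have hno : ∀ i < w + 1, ¬(l[i]! = false ∧ l[i+1]! = true) := by
        intro i hi hx
        have h2 := hA' i (by omega)
        rw [h0, h1, hx.1, hx.2] at h2
        simp [rank0] at h2
      refine ext_get! (by simp [hl]) ?_
      intro j hj
      rw [hl] at hj
      rw [get!_replicate hj]
      exact prop_false l (w+1) hno j (by omega) 0 (by omega) h0
    · -- 01 : prefix case
      left
      refine ⟨l.drop 2, by simp [hl], ?_⟩
      have ht2 : l.take 2 = [false, true] := by
        have h2 := kmer_eq l 0 (by omega)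
        rw [h0, h1] at h2
        simpa [kmerAt] using h2
      conv_lhs => rw [← List.take_append_drop 2 l]
      rw [ht2]
      rfl
    · -- 10
      right; right; left
      have hno : ∀ i < w + 1, ¬(l[i]! = false ∧ l[i+1]! = true) := by
        intro i hi hx
        have h2 := hA' i (by omega)
        rw [h0, h1, hx.1, hx.2] at h2
        simp [rank0] at h2
      refine ext_get! (by simp [hl]) ?_
      intro j hj
      rw [hl] at hj
      cases j with
      | zero => rw [get!_cons_zero]; exact h0
      | succ j =>
        rw [get!_cons_succ, get!_replicate (show j < w + 1 by omega)]
        exact prop_false l (w+1) hno (j+1) (by omega) 1 (by omega) h1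
    · -- 11 : all ones
      right; right; right; right; right
      have hall : ∀ i ≤ w, l[i]! = true ∧ l[i+1]! = true := by
        intro i hi
        have h2 := hA' i hi
        rw [h0, h1] at h2
        have h3 : (3:ℕ) ≤ rank0 [l[i]!, l[i+1]!] := le_trans (by simp [rank0]) h2
        exact rank0_ge_three h3
      refine ext_get! (by simp [hl]) ?_
      intro j hj
      rw [hl] at hj
      rw [get!_replicate hj]
      rcases Nat.lt_or_ge j (w+1) with h2 | h2
      · exact (hall j (by omega)).1
      · have : j = w + 1 := by omega
        subst this
        exact (hall w le_rfl).2
  · -- suffix minimal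
    have hB' : ∀ i ≤ w, rank0 [l[w]!, l[w+1]!] ≤ rank0 [l[i]!, l[i+1]!] := by
      intro i hi
      have := hB i hi
      rwa [hk w le_rfl, hk i hi] at this
    have hU' : ∀ i < w, [l[i]!, l[i+1]!] ≠ [l[w]!, l[w+1]!] := by
      intro i hi
      rw [← hk i (le_of_lt hi), ← hk w le_rfl]
      exact hU i hi
    cases hw0 : l[w]! <;> cases hw1 : l[w+1]!
    · -- 00 : contradiction with uniqueness
      exfalso
      have heq : ∀ i ≤ w, l[i]! = l[i+1]! := by
        intro i hi
        have h2 := hB' i hi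
        rw [hw0, hw1] at h2
        exact rank0_ge_two (le_trans (by simp [rank0]) h2)
      have hchain : ∀ j ≤ w + 1, l[j]! = l[0]! := by
        intro j
        induction j with
        | zero => intro _; rfl
        | succ j ih =>
          intro hj
          rw [← heq j (by omega)]
          exact ih (by omega)
      refine hU' 0 (by omega) ?_
      rw [(heq 0 (by omega)).symm, hchain w (by omega), hchain (w+1) le_rfl]
    · -- 01 : the cB case
      right; left
      have hno : ∀ i < w, ¬(l[i]! = false ∧ l[i+1]! = true) := by
        intro i hi hx
        exact hU' i hi (by rw [hx.1, hx.2, hw0, hw1])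
      have hex : ∃ a, l[a]! = false := ⟨w, hw0⟩
      have ha0 : l[Nat.find hex]! = false := Nat.find_spec hex
      have haw : Nat.find hex ≤ w := Nat.find_le hw0
      set a := Nat.find hex with hadef
      have hlt : ∀ i < a, l[i]! = true := by
        intro i hi
        have h2 := Nat.find_min hex hi
        cases h3 : l[i]! with
        | false => exact absurd h3 h2
        | true => rfl
      refine ⟨a, haw, ?_⟩
      refine ext_get! (by rw [hl, cB_length haw]) ?_
      intro j hj
      rw [hl] at hj
      rcases Nat.lt_or_ge j a with h1 | h1
      · exact (hlt j h1).trans ((cB_get haw hj).mpr (Or.inl h1)).symm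
      · rcases Nat.lt_or_ge j (w+1) with h2 | h2
        · have hlf : l[j]! = false := prop_false l w hno j (by omega) a (by omega) ha0
          have hcf : (cB w a)[j]! = false := by
            refine bfalse (fun hcon => ?_)
            rcases (cB_get haw hj).mp hcon with h3 | h3 <;> omega
          rw [hlf, hcf]
        · have : j = w + 1 := by omega
          subst this
          rw [hw1, ((cB_get haw hj).mpr (Or.inr rfl))]
    · -- 10 : all ones then zero
      right; right; right; left
      have hno : ∀ i < w, ¬(l[i]! = false ∧ l[i+1]! = true) := by
        intro i hi hx
        have h2 := hB' i (by omega)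
        rw [hw0, hw1, hx.1, hx.2] at h2
        simp [rank0] at h2
      have hall : ∀ j ≤ w, l[j]! = true := by
        intro j hj
        by_contra hne
        have hf : l[j]! = false := bfalse hne
        have := prop_false l w hno w le_rfl j hj hf
        rw [hw0] at this
        simp at this
      refine ext_get! (by simp [hl]) ?_
      intro j hj
      rw [hl] at hj
      rcases Nat.lt_or_ge j (w+1) with h2 | h2
      · rw [hall j (by omega), ((c2_get hj).mpr h2)]
      · have : j = w + 1 := by omega
        subst this
        rw [hw1]
        refine (bfalse (fun hcon => ?_)).symm
        have := (c2_get hj).mp hcon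
        omega
    · -- 11 : contradiction with uniqueness
      exfalso
      have hall : ∀ i ≤ w, l[i]! = true ∧ l[i+1]! = true := by
        intro i hi
        have h2 := hB' i hi
        rw [hw0, hw1] at h2
        exact rank0_ge_three (le_trans (by simp [rank0]) h2)
      refine hU' 0 (by omega) ?_
      rw [(hall 0 (by omega)).1, (hall 0 (by omega)).2, hw0, hw1]

lemma chargedA (w : ℕ) (t : List Bool) : Charged rank0 w (false :: true :: t) := by
  left
  intro i hi
  have h0 : kmerAt (false :: true :: t) 0 = [false, true] := rfl
  rw [h0]
  have : rank0 [false, true] = 0 := rfl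
  rw [this]
  exact Nat.zero_le _

lemma chargedB {w a : ℕ} (hw : 2 ≤ w) (ha : a ≤ w) : Charged rank0 w (cB w a) := by
  have hl : (cB w a).length = w + 2 := cB_length ha
  have hkw : kmerAt (cB w a) w = [false, true] := by
    rw [kmer_eq _ w (by omega)]
    have h1 : (cB w a)[w]! = false := by
      refine bfalse (fun h => ?_)
      rcases (cB_get ha (show w < w + 2 by omega)).mp h with h2 | h2 <;> omega
    have h2 : (cB w a)[w+1]! = true := (cB_get ha (by omega)).mpr (Or.inr rfl)
    rw [h1, h2]
  right
  constructor
  · intro i hi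
    rw [hkw]
    have : rank0 [false, true] = 0 := rfl
    rw [this]
    exact Nat.zero_le _
  · intro i hi
    rw [hkw, kmer_eq _ i (by omega)]
    intro hcon
    have hc1 : (cB w a)[i]! = false := by injection hcon with e1 e2
    have hc2 : (cB w a)[i+1]! = true := by
      injection hcon with e1 e2
      injection e2 with e2 e3
    have hge : ¬ (i < a ∨ i = w + 1) := fun h => by
      rw [(cB_get ha (show i < w + 2 by omega)).mpr h] at hc1
      simp at hc1
    have := (cB_get ha (show i + 1 < w + 2 by omega)).mp hc2
    omega

lemma chargedC1 {w : ℕ} (hw : 2 ≤ w) : Charged rank0 w (true :: List.replicate (w+1) false) := by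
  set l := true :: List.replicate (w+1) false with hldef
  have hl : l.length = w + 2 := by simp [hldef]
  have hg0 : l[0]! = true := get!_cons_zero _ _
  have hgs : ∀ j, j < w + 1 → l[j+1]! = false := by
    intro j hj
    rw [hldef, get!_cons_succ, get!_replicate hj]
  left
  intro i hi
  rw [kmer_eq _ 0 (by omega), kmer_eq _ i (by omega)]
  rw [hg0]
  have h1 : l[0+1]! = false := hgs 0 (by omega)
  rw [show (0:ℕ)+1 = 1 from rfl] at h1
  rw [h1]
  cases i with
  | zero => rw [hg0, h1]
  | succ i =>
    rw [hgs i (by omega), hgs (i+1) (by omega)]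
    simp [rank0]

lemma chargedC2 {w : ℕ} (hw : 2 ≤ w) : Charged rank0 w (List.replicate (w+1) true ++ [false]) := by
  set l := List.replicate (w+1) true ++ [false] with hldef
  have hl : l.length = w + 2 := by simp [hldef]
  have hgt : ∀ j, j < w + 1 → l[j]! = true := by
    intro j hj
    rw [hldef]
    exact (c2_get (by omega)).mpr hj
  have hgw : l[w+1]! = false := by
    refine bfalse (fun hcon => ?_)
    rw [hldef] at hcon
    have := (c2_get (show w + 1 < w + 2 by omega)).mp hcon
    omega
  have hkw : kmerAt l w = [true, false] := by
    rw [kmer_eq _ w (by omega), hgt w (by omega), hgw]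
  right
  constructor
  · intro i hi
    rw [hkw, kmer_eq _ i (by omega)]
    rcases Nat.lt_or_ge i w with h1 | h1
    · rw [hgt i (by omega), hgt (i+1) (by omega)]
      simp [rank0]
    · rw [show i = w by omega, hgt w (by omega), hgw]
  · intro i hi
    rw [hkw, kmer_eq _ i (by omega), hgt i (by omega), hgt (i+1) (by omega)]
    simp

lemma chargedC3 {w : ℕ} : Charged rank0 w (List.replicate (w+2) false) := by
  left
  intro i hi
  rw [kmer_eq (List.replicate (w+2) false) 0 (by rw [List.length_replicate]; omega),
      kmer_eq (List.replicate (w+2) false) i (by rw [List.length_replicate]; omega)]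
  rw [get!_replicate (show (0:ℕ) < w+2 by omega), get!_replicate (show (0:ℕ)+1 < w+2 by omega),
      get!_replicate (show i < w+2 by omega), get!_replicate (show i+1 < w+2 by omega)]

lemma chargedC4 {w : ℕ} : Charged rank0 w (List.replicate (w+2) true) := by
  left
  intro i hi
  rw [kmer_eq (List.replicate (w+2) true) 0 (by rw [List.length_replicate]; omega),
      kmer_eq (List.replicate (w+2) true) i (by rw [List.length_replicate]; omega)]
  rw [get!_replicate (show (0:ℕ) < w+2 by omega), get!_replicate (show (0:ℕ)+1 < w+2 by omega),
      get!_replicate (show i < w+2 by omega), get!_replicate (show i+1 < w+2 by omega)]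

end Stmt8Aux
namespace Stmt8Aux

lemma card_lists (w : ℕ) : Nat.card {t : List Bool | t.length = w} = 2 ^ w := by
  have e : List.Vector Bool w ≃ {t : List Bool | t.length = w} :=
    ⟨fun v => ⟨v.1, v.2⟩, fun x => ⟨x.1, x.2⟩, fun _ => rfl, fun _ => rfl⟩
  rw [← Nat.card_congr e, Nat.card_eq_fintype_card, card_vector, Fintype.card_bool]

lemma lists_finite (w : ℕ) : {t : List Bool | t.length = w}.Finite := by
  have e : List.Vector Bool w ≃ {t : List Bool | t.length = w} :=
    ⟨fun v => ⟨v.1, v.2⟩, fun x => ⟨x.1, x.2⟩, fun _ => rfl, fun _ => rfl⟩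
  exact Set.finite_coe_iff.mp (Finite.of_equiv _ e)

theorem key (w : ℕ) (hw : 2 ≤ w) :
    Nat.card {l : List Bool // l.length = w + 2 ∧ Charged rank0 w l} = 2 ^ w + w + 5 := by
  classical
  set c1 : List Bool := true :: List.replicate (w+1) false with hc1
  set c2 : List Bool := List.replicate (w+1) true ++ [false] with hc2
  set c3 : List Bool := List.replicate (w+2) false with hc3
  set c4 : List Bool := List.replicate (w+2) true with hc4
  set A : Set (List Bool) := (fun t => false :: true :: t) '' {t | t.length = w} with hA
  set B : Set (List Bool) := (fun a => cB w a) '' (Set.Iic w) with hB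
  set C : Set (List Bool) := {c1, c2, c3, c4} with hC
  -- set equality
  have hset : {l : List Bool | l.length = w + 2 ∧ Charged rank0 w l} = (A ∪ B) ∪ C := by
    ext l
    constructor
    · rintro ⟨hl, hc⟩
      rcases forward hw hl hc with ⟨t, ht, rfl⟩ | ⟨a, ha, rfl⟩ | rfl | rfl | rfl | rfl
      · exact Or.inl (Or.inl ⟨t, ht, rfl⟩)
      · exact Or.inl (Or.inr ⟨a, Set.mem_Iic.mpr ha, rfl⟩)
      · exact Or.inr (Or.inl rfl)
      · exact Or.inr (Or.inr (Or.inl rfl))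
      · exact Or.inr (Or.inr (Or.inr (Or.inl rfl)))
      · exact Or.inr (Or.inr (Or.inr (Or.inr rfl)))
    · rintro ((⟨t, ht, rfl⟩ | ⟨a, ha, rfl⟩) | hCm)
      · exact ⟨by simp [Set.mem_setOf_eq.mp ht], chargedA w t⟩
      · exact ⟨cB_length (Set.mem_Iic.mp ha), chargedB hw (Set.mem_Iic.mp ha)⟩
      · rcases hCm with rfl | rfl | rfl | rfl
        · exact ⟨by simp [hc1], chargedC1 hw⟩
        · exact ⟨by simp [hc2], chargedC2 hw⟩
        · exact ⟨by simp [hc3], chargedC3⟩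
        · exact ⟨by simp [hc4], chargedC4⟩
  -- feature lemmas for disjointness
  have hmemA : ∀ x ∈ A, x[0]! = false ∧ x[1]! = true := by
    rintro x ⟨t, ht, rfl⟩
    refine ⟨get!_cons_zero _ _, ?_⟩
    rw [show (1:ℕ) = 0 + 1 from rfl, get!_cons_succ, get!_cons_zero]
  have hmemB : ∀ x ∈ B, x[w]! = false ∧ x[w+1]! = true := by
    rintro x ⟨a, ha, rfl⟩
    have ha' : a ≤ w := Set.mem_Iic.mp ha
    constructor
    · refine bfalse (fun h => ?_)
      rcases (cB_get ha' (show w < w + 2 by omega)).mp h with h2 | h2 <;> omega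
    · exact (cB_get ha' (by omega)).mpr (Or.inr rfl)
  have hdAB : Disjoint A B := by
    rw [Set.disjoint_left]
    rintro x hx ⟨a, ha, rfl⟩
    have ha' : a ≤ w := Set.mem_Iic.mp ha
    obtain ⟨h0, h1⟩ := hmemA _ hx
    have hga : ¬ (0 < a ∨ 0 = w + 1) := fun h => by
      rw [(cB_get ha' (show 0 < w + 2 by omega)).mpr h] at h0
      simp at h0
    have := (cB_get ha' (show 1 < w + 2 by omega)).mp h1
    omega
  have hdAC : Disjoint A C := by
    rw [Set.disjoint_left]
    intro x hx hxc
    obtain ⟨h0, h1⟩ := hmemA _ hx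
    rcases hxc with rfl | rfl | rfl | rfl
    · rw [get!_cons_zero] at h0; simp at h0
    · rw [(c2_get (show 0 < w + 2 by omega)).mpr (by omega)] at h0; simp at h0
    · rw [get!_replicate (show (1:ℕ) < w + 2 by omega)] at h1; simp at h1
    · rw [get!_replicate (show (0:ℕ) < w + 2 by omega)] at h0; simp at h0
  have hdBC : Disjoint B C := by
    rw [Set.disjoint_left]
    intro x hx hxc
    obtain ⟨h0, h1⟩ := hmemB _ hx
    rcases hxc with rfl | rfl | rfl | rfl
    · rw [show (w+1) = w + 1 from rfl] at h1
      rw [hc1, get!_cons_succ, get!_replicate (show w < w + 1 by omega)] at h1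
      simp at h1
    · have := (c2_get (show w + 1 < w + 2 by omega)).mp h1
      omega
    · rw [get!_replicate (show w + 1 < w + 2 by omega)] at h1; simp at h1
    · rw [get!_replicate (show w < w + 2 by omega)] at h0; simp at h0
  -- cardinalities
  have hAfin : A.Finite := (lists_finite w).image _
  have hBfin : B.Finite := (Set.finite_Iic w).image _
  have hCfin : C.Finite := by
    exact (Set.finite_singleton c4).insert c3 |>.insert c2 |>.insert c1
  have hAcard : A.ncard = 2 ^ w := by
    rw [hA, Set.ncard_image_of_injective _ (fun x y h => by simpa using h),
        ← Nat.card_coe_set_eq, card_lists]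
  have hBcard : B.ncard = w + 1 := by
    rw [hB, Set.ncard_image_of_injOn, ← Finset.coe_Iic, Set.ncard_coe_finset, Nat.card_Iic]
    intro a ha b hb h
    have := congrArg (List.count true) h
    simp [cB, List.count_append, List.count_replicate] at this
    omega
  have hcnt1 : c1.count true = 1 := by simp [hc1, List.count_cons, List.count_replicate]
  have hcnt2 : c2.count true = w + 1 := by simp [hc2, List.count_append, List.count_replicate, List.count_cons]
  have hcnt3 : c3.count true = 0 := by simp [hc3, List.count_replicate]
  have hcnt4 : c4.count true = w + 2 := by simp [hc4, List.count_replicate]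
  have hCcard : C.ncard = 4 := by
    rw [hC]
    rw [Set.ncard_insert_of_notMem ?h1 (by exact (Set.finite_singleton c4).insert c3 |>.insert c2),
        Set.ncard_insert_of_notMem ?h2 (by exact (Set.finite_singleton c4).insert c3),
        Set.ncard_insert_of_notMem ?h3 (Set.finite_singleton c4),
        Set.ncard_singleton]
    case h1 =>
      intro h
      rcases h with h | h | h
      all_goals (have := congrArg (List.count true) h;
                 rw [hcnt1] at this; simp only [hcnt2, hcnt3, hcnt4] at this; omega)
    case h2 =>
      intro h
      rcases h with h | h
      all_goals (have := congrArg (List.count true) h;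
                 rw [hcnt2] at this; simp only [hcnt3, hcnt4] at this; omega)
    case h3 =>
      intro h
      rw [Set.mem_singleton_iff] at h
      have := congrArg (List.count true) h
      rw [hcnt3] at this; simp only [hcnt4] at this; omega
  have hfinal : Nat.card {l : List Bool // l.length = w + 2 ∧ Charged rank0 w l}
      = ({l : List Bool | l.length = w + 2 ∧ Charged rank0 w l}).ncard :=
    Nat.card_coe_set_eq _
  rw [hfinal, hset,
      Set.ncard_union_eq (Set.disjoint_union_left.mpr ⟨hdAC, hdBC⟩) (hAfin.union hBfin) hCfin,
      Set.ncard_union_eq hdAB hAfin hBfin, hAcard, hBcard, hCcard]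
  omega

end Stmt8Aux


/-- For every w ≥ 2, the (2,2,w)-minimizer given by the order (01,10,00,11) has density
exactly (2^w + w + 5)/2^{w+2}. -/
theorem stmt8 (w : ℕ) (hw : 2 ≤ w) :
    (Nat.card {l : List Bool // l.length = w + 2 ∧ Charged rank0 w l} : ℚ) / 2 ^ (w + 2)
      = (2 ^ w + w + 5 : ℚ) / 2 ^ (w + 2) := by
  rw [Stmt8Aux.key w hw]
  push_cast
  ring
end

section
/- For every w ≥ 2, every minimizer with parameters (σ=2, k=2, w) has density at least (2^w + w + 5)/2^{w+2}; in particular, the order (01, 10, 00, 11) is optimal for all w ≥ 2. -/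
namespace Minimizer

variable {rank : List Bool → ℕ} {w : ℕ}

def window (w : ℕ) (f : ℕ → Bool) : List Bool := List.ofFn fun j : Fin (w + 2) => f j

@[simp] lemma length_window (f : ℕ → Bool) : (window w f).length = w + 2 := List.length_ofFn

lemma getElem?_window (f : ℕ → Bool) {j : ℕ} (hj : j < w + 2) :
    (window w f)[j]? = some (f j) := by
  rw [window, List.getElem?_ofFn]
  simp [hj]

lemma kmerAt_window (f : ℕ → Bool) {i : ℕ} (hi : i ≤ w) :
    kmerAt (window w f) i = [f i, f (i + 1)] := by
  apply List.ext_getElem?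
  intro m
  obtain rfl | rfl | hm : m = 0 ∨ m = 1 ∨ 2 ≤ m := by omega
  · simp [kmerAt, getElem?_window f (show i < w + 2 by omega)]
  · simp [kmerAt, getElem?_window f (show i + 1 < w + 2 by omega)]
  · simp [kmerAt, show ¬ m < 2 by omega]

lemma window_ne_window {f g : ℕ → Bool} (j : ℕ) (hj : j < w + 2) (h : f j ≠ g j) :
    window w f ≠ window w g := by
  intro he
  have := congrArg (·[j]?) he
  simp only [getElem?_window f hj, getElem?_window g hj, Option.some.injEq] at this
  exact h this

lemma window_ne_window_of_kmer {f g : ℕ → Bool} (i : ℕ) (hi : i ≤ w)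
    (h : [f i, f (i + 1)] ≠ [g i, g (i + 1)]) : window w f ≠ window w g := fun he =>
  h (by rw [← kmerAt_window f hi, ← kmerAt_window g hi, he])

lemma take_two_window (f : ℕ → Bool) : (window w f).take 2 = [f 0, f 1] := by
  simpa [kmerAt] using kmerAt_window (w := w) f (Nat.zero_le w)

lemma charged_window_of_prefix (f : ℕ → Bool) {a b : Bool} (h0 : f 0 = a) (h1 : f 1 = b)
    (hmin : ∀ i ≤ w, rank [a, b] ≤ rank [f i, f (i + 1)]) : Charged rank w (window w f) := by
  left
  intro i hi
  rw [kmerAt_window f (Nat.zero_le w), kmerAt_window f hi, h0, h1]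
  exact hmin i hi

lemma charged_window_of_suffix (f : ℕ → Bool) {a b : Bool} (hw : f w = a) (hw1 : f (w + 1) = b)
    (hmin : ∀ i ≤ w, rank [a, b] ≤ rank [f i, f (i + 1)])
    (huniq : ∀ i < w, ¬(f i = a ∧ f (i + 1) = b)) : Charged rank w (window w f) := by
  right
  refine ⟨fun i hi => ?_, fun i hi => ?_⟩
  · rw [kmerAt_window f le_rfl, kmerAt_window f hi, hw, hw1]
    exact hmin i hi
  · rw [kmerAt_window f le_rfl, kmerAt_window f hi.le, hw, hw1]
    simpa using huniq i hi

lemma charged_of_prefix_min {l : List Bool} (hl : l.length = w + 2)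
    (hmin : ∀ a b, rank (kmerAt l 0) ≤ rank [a, b]) : Charged rank w l := by
  left
  intro i hi
  have hlen : (kmerAt l i).length = 2 := by simp [kmerAt]; omega
  obtain ⟨a, b, hab⟩ := List.length_eq_two.1 hlen
  rw [hab]
  exact hmin a b

lemma charged_ones_zero (hw : 1 ≤ w) : Charged rank w (window w fun j => decide (j ≤ w)) := by
  rcases le_total (rank [true, true]) (rank [true, false]) with h | h
  · refine charged_window_of_prefix (a := true) (b := true) _ (by simp) (by simpa using hw)
      fun i hi => ?_
    obtain hi | rfl := hi.lt_or_eq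
    · simp [hi.le, show i + 1 ≤ w by omega]
    · simpa using h
  · refine charged_window_of_suffix (a := true) (b := false) _ (by simp) (by simp)
      (fun i hi => ?_) (fun i hi => by simp; omega)
    obtain hi | rfl := hi.lt_or_eq
    · simpa [hi.le, show i + 1 ≤ w by omega] using h
    · simp

lemma exists_charged_ones_zeros (hw : 2 ≤ w) :
    ∃ a, 1 ≤ a ∧ a ≤ w ∧ Charged rank w (window w fun j => decide (j < a)) := by
  rcases le_total (rank [true, false]) (rank [false, false]) with h10 | h00
  · refine ⟨1, le_rfl, by omega,
      charged_window_of_prefix (a := true) (b := false) _ (by simp) (by simp) fun i _ => ?_⟩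
    rcases i with _ | i <;> simp [h10]
  rcases le_total (rank [false, false]) (rank [true, true]) with h11 | h11
  · refine ⟨w, by omega, le_rfl, charged_window_of_suffix (a := false) (b := false) _ (by simp)
      (by simp) (fun i hi => ?_) (fun i hi => by simp; omega)⟩
    obtain h | h | h : i + 1 < w ∨ i + 1 = w ∨ w ≤ i := by omega
    · simpa [h, show i < w by omega] using h11
    · simpa [h, show i < w by omega] using h00
    · simp [show ¬ i < w by omega, show ¬ i + 1 < w by omega]
  · refine ⟨2, by norm_num, hw,
      charged_window_of_prefix (a := true) (b := true) _ (by simp) (by simp) fun i hi => ?_⟩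
    obtain rfl | rfl | h : i = 0 ∨ i = 1 ∨ 2 ≤ i := by omega
    · simp
    · simpa using h11.trans h00
    · simpa [show ¬ i < 2 by omega, show ¬ i + 1 < 2 by omega] using h11

lemma exists_charged_alternating :
    ∃ f : ℕ → Bool, Charged rank w (window w f) ∧ f 1 = !f 0 ∧ f (w + 1) = !f w := by
  rcases le_total (rank [false, true]) (rank [true, false]) with h | h
  · refine ⟨fun j => decide (j % 2 = 1), charged_window_of_prefix (a := false) (b := true) _
      (by simp) (by simp) fun i _ => ?_, by simp,
      by simp only [Bool.eq_not, ne_eq, decide_eq_decide]; omega⟩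
    rcases Nat.mod_two_eq_zero_or_one i with hi | hi
    · simp [hi, show (i + 1) % 2 = 1 by omega]
    · simpa [hi, show (i + 1) % 2 = 0 by omega] using h
  · refine ⟨fun j => decide (j % 2 = 0), charged_window_of_prefix (a := true) (b := false) _
      (by simp) (by simp) fun i _ => ?_, by simp,
      by simp only [Bool.eq_not, ne_eq, decide_eq_decide]; omega⟩
    rcases Nat.mod_two_eq_zero_or_one i with hi | hi
    · simp [hi, show (i + 1) % 2 = 1 by omega]
    · simpa [hi, show (i + 1) % 2 = 0 by omega] using h

def Extras (rank : List Bool → ℕ) (w : ℕ) (m : List Bool) (L : List (ℕ → Bool)) : Prop :=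
  (L.map (window w)).Nodup ∧ ∀ f ∈ L, Charged rank w (window w f) ∧ [f 0, f 1] ≠ m

lemma nodup_map_window_range {n : ℕ} (fam : ℕ → ℕ → Bool)
    (h : ∀ a b, a < b → b < n → window w (fam a) ≠ window w (fam b)) :
    (((List.range n).map fam).map (window w)).Nodup := by
  rw [List.map_map]
  refine List.nodup_range.map_on fun a ha b hb hab => ?_
  rw [List.mem_range] at ha hb
  by_contra hne
  rcases Nat.lt_or_gt_of_ne hne with hlt | hlt
  · exact h a b hlt hb hab
  · exact h b a hlt ha hab.symm

lemma two_pow_add_length_le_card {x y : Bool} (hmin : ∀ a b, rank [x, y] ≤ rank [a, b])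
    {L : List (ℕ → Bool)} (hL : Extras rank w [x, y] L) :
    2 ^ w + L.length ≤ Nat.card {l : List Bool // l.length = w + 2 ∧ Charged rank w l} := by
  let P : Finset (List Bool) := Finset.univ.image fun t : Fin w → Bool => [x, y] ++ List.ofFn t
  let E : Finset (List Bool) := (L.map (window w)).toFinset
  have hP : P.card = 2 ^ w := by
    rw [Finset.card_image_of_injective _ fun t t' h =>
      List.ofFn_injective (List.append_cancel_left h)]
    simp
  have hE : E.card = L.length := by
    rw [List.toFinset_card_of_nodup hL.1, List.length_map]
  have hdisj : Disjoint P E := by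
    rw [Finset.disjoint_left]
    simp only [P, E, Finset.mem_image, Finset.mem_univ, true_and, List.mem_toFinset, List.mem_map]
    rintro _ ⟨t, rfl⟩ ⟨f, hf, hft⟩
    apply (hL.2 f hf).2
    rw [← take_two_window (w := w), hft]
    simp
  have hsub : (↑(P ∪ E) : Set (List Bool)) ⊆ {l | l.length = w + 2 ∧ Charged rank w l} := by
    intro l hl
    simp only [Finset.coe_union, Set.mem_union, Finset.mem_coe, P, E, Finset.mem_image,
      Finset.mem_univ, true_and, List.mem_toFinset, List.mem_map] at hl
    rcases hl with ⟨t, rfl⟩ | ⟨f, hf, rfl⟩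
    · refine ⟨by simp, charged_of_prefix_min (by simp) fun a b => ?_⟩
      simpa [kmerAt] using hmin a b
    · exact ⟨length_window f, (hL.2 f hf).1⟩
  calc 2 ^ w + L.length = (P ∪ E).card := by rw [Finset.card_union_of_disjoint hdisj, hP, hE]
    _ = (↑(P ∪ E) : Set (List Bool)).ncard := (Set.ncard_coe_finset _).symm
    _ ≤ {l | l.length = w + 2 ∧ Charged rank w l}.ncard :=
      Set.ncard_le_ncard hsub ((List.finite_length_eq Bool (w + 2)).subset fun _ hl => hl.1)
    _ = _ := (Nat.card_coe_set_eq _).symm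

lemma exists_extras_of_min_01 (hw : 2 ≤ w)
    (hmin : ∀ a b, rank [false, true] ≤ rank [a, b]) :
    ∃ L, Extras rank w [false, true] L ∧ L.length = w + 5 := by
  obtain ⟨c, hc1, hcw, hc⟩ := exists_charged_ones_zeros (rank := rank) hw
  refine ⟨(List.range (w + 1)).map (fun a j => decide (j < a ∨ j = w + 1)) ++
    [fun _ => false, fun _ => true, fun j => decide (j ≤ w), fun j => decide (j < c)],
    ⟨?_, ?_⟩, by simp⟩
  · rw [List.map_append, List.nodup_append]
    refine ⟨nodup_map_window_range _ fun a b hab hb =>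
      window_ne_window a (by omega) (by simp; omega), ?_, ?_⟩
    · simp only [List.map_cons, List.map_nil, List.nodup_cons, List.mem_cons, List.not_mem_nil,
        or_false, List.nodup_nil, not_or, not_false_eq_true, and_true]
      refine ⟨⟨?_, ?_, ?_⟩, ⟨?_, ?_⟩, ?_⟩
      · exact window_ne_window 0 (by omega) (by simp)
      · exact window_ne_window 0 (by omega) (by simp)
      · exact window_ne_window 0 (by omega) (by simp; omega)
      · exact window_ne_window (w + 1) (by omega) (by simp)
      · exact window_ne_window w (by omega) (by simp; omega)
      · exact window_ne_window w (by omega) (by simp; omega)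
    · simp only [List.mem_map, List.mem_range, List.map_cons, List.map_nil, List.mem_cons,
        List.not_mem_nil, or_false]
      rintro _ ⟨_, ⟨a, ha, rfl⟩, rfl⟩ _ (rfl | rfl | rfl | rfl)
      · exact window_ne_window (w + 1) (by omega) (by simp)
      · exact window_ne_window w (by omega) (by simp; omega)
      · exact window_ne_window (w + 1) (by omega) (by simp)
      · exact window_ne_window (w + 1) (by omega) (by simp; omega)
  · simp only [List.mem_append, List.mem_map, List.mem_range, List.mem_cons, List.not_mem_nil,
      or_false]
    rintro f (⟨a, ha, rfl⟩ | rfl | rfl | rfl | rfl)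
    · exact ⟨charged_window_of_suffix (a := false) (b := true) _ (by simp; omega) (by simp)
        (fun _ _ => hmin _ _) (fun i hi => by simp; omega), by simp; omega⟩
    · exact ⟨charged_window_of_prefix _ rfl rfl fun _ _ => le_rfl, by simp⟩
    · exact ⟨charged_window_of_prefix _ rfl rfl fun _ _ => le_rfl, by simp⟩
    · exact ⟨charged_ones_zero (by omega), by simp⟩
    · exact ⟨hc, by simp; omega⟩

lemma extras_append_of_min_00 (hmin : ∀ a b, rank [false, false] ≤ rank [a, b])
    {S : List (ℕ → Bool)} (hS : Extras rank w [false, false] S)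
    (hend : ∀ f ∈ S, f w = true ∨ f (w + 1) = true) :
    Extras rank w [false, false]
      ((List.range w).map (fun a j => decide (j < w ∧ j + 1 ≠ a)) ++ S) := by
  refine ⟨?_, ?_⟩
  · rw [List.map_append, List.nodup_append]
    refine ⟨nodup_map_window_range _ fun a b hab hb => window_ne_window (b - 1) (by omega)
      (by simp only [ne_eq, decide_eq_decide]; omega), hS.1, ?_⟩
    simp only [List.mem_map, List.mem_range]
    rintro _ ⟨_, ⟨a, ha, rfl⟩, rfl⟩ _ ⟨f, hf, rfl⟩
    exact window_ne_window_of_kmer w le_rfl (by rcases hend f hf with h | h <;> simp [h])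
  · simp only [List.mem_append, List.mem_map, List.mem_range]
    rintro f (⟨a, ha, rfl⟩ | hf)
    · exact ⟨charged_window_of_suffix (a := false) (b := false) _ (by simp) (by simp)
        (fun _ _ => hmin _ _) (fun i hi => by simp; omega), by simp; omega⟩
    · exact hS.2 f hf

lemma exists_extras_of_min_00_of_01 (hw : 2 ≤ w)
    (hs : ∀ a b, (a || b) = true → rank [false, true] ≤ rank [a, b]) :
    ∃ S, Extras rank w [false, false] S ∧ (∀ f ∈ S, f w = true ∨ f (w + 1) = true) ∧
      S.length = 5 := by
  -- `1^(w+2)`, `1^(w+1) 0`, `0 1^(w+1)`, `0 1^(w-1) 0 1`, `0 1^w 0`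
  refine ⟨[fun _ => true, fun j => decide (j ≤ w), fun j => decide (j ≠ 0),
    fun j => decide (j ≠ 0 ∧ j ≠ w), fun j => decide (j ≠ 0 ∧ j ≠ w + 1)],
    ⟨?_, ?_⟩, ?_, rfl⟩
  · simp only [List.map_cons, List.map_nil, List.nodup_cons, List.mem_cons, List.not_mem_nil,
      or_false, List.nodup_nil, not_or, not_false_eq_true, and_true]
    refine ⟨⟨?_, ?_, ?_, ?_⟩, ⟨?_, ?_, ?_⟩, ⟨?_, ?_⟩, ?_⟩
    · exact window_ne_window (w + 1) (by omega) (by simp)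
    · exact window_ne_window 0 (by omega) (by simp)
    · exact window_ne_window 0 (by omega) (by simp)
    · exact window_ne_window 0 (by omega) (by simp)
    · exact window_ne_window 0 (by omega) (by simp)
    · exact window_ne_window 0 (by omega) (by simp)
    · exact window_ne_window 0 (by omega) (by simp)
    · exact window_ne_window w (by omega) (by simp; omega)
    · exact window_ne_window (w + 1) (by omega) (by simp)
    · exact window_ne_window w (by omega) (by simp; omega)
  · simp only [List.mem_cons, List.not_mem_nil, or_false]
    rintro f (rfl | rfl | rfl | rfl | rfl)
    · exact ⟨charged_window_of_prefix _ rfl rfl fun _ _ => le_rfl, by simp⟩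
    · exact ⟨charged_ones_zero (by omega), by simp⟩
    all_goals exact ⟨charged_window_of_prefix (a := false) (b := true) _ (by simp)
      (by simp <;> omega) fun i hi => hs _ _ (by simp <;> omega), by simp <;> omega⟩
  · simp only [List.mem_cons, List.not_mem_nil, or_false]
    rintro f (rfl | rfl | rfl | rfl | rfl) <;> simp [show w ≠ 0 by omega]

lemma exists_extras_of_min_00_of_10 (hw : 2 ≤ w)
    (hs : ∀ a b, (a || b) = true → rank [true, false] ≤ rank [a, b]) :
    ∃ S, Extras rank w [false, false] S ∧ (∀ f ∈ S, f w = true ∨ f (w + 1) = true) ∧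
      S.length = 5 := by
  -- `1^(w+2)`, `1^(w+1) 0`, `1 0 1^w`, `1 0 1^(w-1) 0`, `0 1^w 0`
  refine ⟨[fun _ => true, fun j => decide (j ≤ w), fun j => decide (j ≠ 1),
    fun j => decide (j ≠ 1 ∧ j ≠ w + 1), fun j => decide (j ≠ 0 ∧ j ≠ w + 1)],
    ⟨?_, ?_⟩, ?_, rfl⟩
  · simp only [List.map_cons, List.map_nil, List.nodup_cons, List.mem_cons, List.not_mem_nil,
      or_false, List.nodup_nil, not_or, not_false_eq_true, and_true]
    refine ⟨⟨?_, ?_, ?_, ?_⟩, ⟨?_, ?_, ?_⟩, ⟨?_, ?_⟩, ?_⟩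
    · exact window_ne_window (w + 1) (by omega) (by simp)
    · exact window_ne_window 1 (by omega) (by simp)
    · exact window_ne_window 1 (by omega) (by simp)
    · exact window_ne_window 0 (by omega) (by simp)
    · exact window_ne_window 1 (by omega) (by simp; omega)
    · exact window_ne_window 1 (by omega) (by simp; omega)
    · exact window_ne_window 0 (by omega) (by simp)
    · exact window_ne_window (w + 1) (by omega) (by simp; omega)
    · exact window_ne_window 0 (by omega) (by simp)
    · exact window_ne_window 0 (by omega) (by simp)
  · simp only [List.mem_cons, List.not_mem_nil, or_false]
    rintro f (rfl | rfl | rfl | rfl | rfl)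
    · exact ⟨charged_window_of_prefix _ rfl rfl fun _ _ => le_rfl, by simp⟩
    · exact ⟨charged_ones_zero (by omega), by simp⟩
    · exact ⟨charged_window_of_prefix (a := true) (b := false) _ (by simp) (by simp)
        fun i hi => hs _ _ (by simp; omega), by simp⟩
    · exact ⟨charged_window_of_prefix (a := true) (b := false) _ (by simp) (by simp)
        fun i hi => hs _ _ (by simp; omega), by simp⟩
    · exact ⟨charged_window_of_suffix (a := true) (b := false) _ (by simp; omega) (by simp)
        (fun i hi => hs _ _ (by simp; omega)) (fun i hi => by simp; omega), by simp; omega⟩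
  · simp only [List.mem_cons, List.not_mem_nil, or_false]
    rintro f (rfl | rfl | rfl | rfl | rfl) <;>
      simp [show w ≠ 0 by omega, show w ≠ 1 by omega]

lemma exists_extras_of_min_00_of_11 (hw : 2 ≤ w)
    (hs : ∀ a b, (a || b) = true → rank [true, true] ≤ rank [a, b]) :
    ∃ S, Extras rank w [false, false] S ∧ (∀ f ∈ S, f w = true ∨ f (w + 1) = true) ∧
      S.length = 5 := by
  obtain ⟨g, hg, hg1, hgw⟩ := exists_charged_alternating (rank := rank) (w := w)
  -- `1^(w+2)`, `1^(w+1) 0`, `1^w 0 1`, an alternating window, and the alternating window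
  -- ending in `0 1 1`
  refine ⟨[fun _ => true, fun j => decide (j ≤ w), fun j => decide (j ≠ w), g,
    fun j => decide (w ≤ j ∨ (w - j) % 2 = 0)], ⟨?_, ?_⟩, ?_, rfl⟩
  · simp only [List.map_cons, List.map_nil, List.nodup_cons, List.mem_cons, List.not_mem_nil,
      or_false, List.nodup_nil, not_or, not_false_eq_true, and_true]
    refine ⟨⟨?_, ?_, ?_, ?_⟩, ⟨?_, ?_, ?_⟩, ⟨?_, ?_⟩, ?_⟩
    · exact window_ne_window (w + 1) (by omega) (by simp)
    · exact window_ne_window w (by omega) (by simp)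
    · exact window_ne_window_of_kmer 0 (by omega) (by rw [hg1]; cases g 0 <;> simp)
    · exact window_ne_window (w - 1) (by omega) (by simp; omega)
    · exact window_ne_window w (by omega) (by simp)
    · exact window_ne_window_of_kmer 0 (by omega)
        (by rw [hg1]; cases g 0 <;> simp [show w ≠ 0 by omega])
    · exact window_ne_window (w + 1) (by omega) (by simp)
    · exact window_ne_window_of_kmer 0 (by omega) (by rw [hg1]; cases g 0 <;> simp <;> omega)
    · exact window_ne_window w (by omega) (by simp)
    · exact window_ne_window_of_kmer w le_rfl (by rw [hgw]; cases g w <;> simp)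
  · simp only [List.mem_cons, List.not_mem_nil, or_false]
    rintro f (rfl | rfl | rfl | hf | rfl)
    · exact ⟨charged_window_of_prefix _ rfl rfl fun _ _ => le_rfl, by simp⟩
    · exact ⟨charged_ones_zero (by omega), by simp⟩
    · exact ⟨charged_window_of_prefix (a := true) (b := true) _ (by simp; omega) (by simp; omega)
        fun i hi => hs _ _ (by simp; omega), by simp; omega⟩
    · rw [hf]
      exact ⟨hg, by rw [hg1]; cases g 0 <;> simp⟩
    · exact ⟨charged_window_of_suffix (a := true) (b := true) _ (by simp) (by simp)
        (fun i hi => hs _ _ (by simp; omega)) (fun i hi => by simp; omega), by simp; omega⟩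
  · simp only [List.mem_cons, List.not_mem_nil, or_false]
    rintro f (rfl | rfl | rfl | rfl | rfl) <;> simp [hgw]

lemma forall_of_or_eq_true {P : Bool → Bool → Prop} (h01 : P false true) (h10 : P true false)
    (h11 : P true true) : ∀ a b, (a || b) = true → P a b := by
  intro a b hab
  cases a <;> cases b <;> simp_all

lemma exists_extras_of_min_00 (hw : 2 ≤ w)
    (hmin : ∀ a b, rank [false, false] ≤ rank [a, b]) :
    ∃ L, Extras rank w [false, false] L ∧ L.length = w + 5 := by
  obtain ⟨S, hS, hend, hlen⟩ : ∃ S, Extras rank w [false, false] S ∧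
      (∀ f ∈ S, f w = true ∨ f (w + 1) = true) ∧ S.length = 5 := by
    rcases le_total (rank [false, true]) (rank [true, false]) with h | h
    · rcases le_total (rank [false, true]) (rank [true, true]) with h' | h'
      · exact exists_extras_of_min_00_of_01 hw (forall_of_or_eq_true le_rfl h h')
      · exact exists_extras_of_min_00_of_11 hw (forall_of_or_eq_true h' (h'.trans h) le_rfl)
    · rcases le_total (rank [true, false]) (rank [true, true]) with h' | h'
      · exact exists_extras_of_min_00_of_10 hw (forall_of_or_eq_true h le_rfl h')
      · exact exists_extras_of_min_00_of_11 hw (forall_of_or_eq_true (h'.trans h) h' le_rfl)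
  exact ⟨_, extras_append_of_min_00 hmin hS hend, by simp [hlen]⟩

lemma kmerAt_map_not (l : List Bool) (i : ℕ) : kmerAt (l.map not) i = (kmerAt l i).map not := by
  simp [kmerAt]

lemma charged_comp_map_not (l : List Bool) :
    Charged (rank ∘ List.map not) w l ↔ Charged rank w (l.map not) := by
  have hinj : Function.Injective (List.map not) := List.map_injective_iff.2 Bool.not_injective
  simp only [Charged, kmerAt_map_not, Function.comp_apply, ne_eq, hinj.eq_iff]

lemma card_charged_comp_map_not :
    Nat.card {l : List Bool // l.length = w + 2 ∧ Charged (rank ∘ List.map not) w l} =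
      Nat.card {l : List Bool // l.length = w + 2 ∧ Charged rank w l} := by
  have hinv : Function.Involutive (List.map not) := fun l => by simp [Function.comp_def]
  exact Nat.card_congr <| hinv.toPerm.subtypeEquiv fun l => by
    simp [charged_comp_map_not]

lemma le_card_charged_of_min (hw : 2 ≤ w) {y : Bool}
    (hmin : ∀ a b, rank [false, y] ≤ rank [a, b]) :
    2 ^ w + w + 5 ≤ Nat.card {l : List Bool // l.length = w + 2 ∧ Charged rank w l} := by
  obtain ⟨L, hL, hlen⟩ : ∃ L, Extras rank w [false, y] L ∧ L.length = w + 5 := by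
    cases y
    · exact exists_extras_of_min_00 hw hmin
    · exact exists_extras_of_min_01 hw hmin
  simpa [hlen, add_assoc] using two_pow_add_length_le_card hmin hL

lemma le_card_charged (hw : 2 ≤ w) :
    2 ^ w + w + 5 ≤ Nat.card {l : List Bool // l.length = w + 2 ∧ Charged rank w l} := by
  obtain ⟨⟨x, y⟩, -, hxy⟩ := Finset.univ.exists_min_image
    (fun p : Bool × Bool => rank [p.1, p.2]) Finset.univ_nonempty
  cases x
  · exact le_card_charged_of_min hw fun a b => hxy (a, b) (Finset.mem_univ _)
  · rw [← card_charged_comp_map_not]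
    exact le_card_charged_of_min (y := !y) hw fun a b => by
      simpa using hxy (!a, !b) (Finset.mem_univ _)

end Minimizer

theorem stmt9_general (w : ℕ) (hw : 2 ≤ w) (rank : List Bool → ℕ) :
    (2 ^ w + w + 5 : ℚ) / 2 ^ (w + 2)
      ≤ (Nat.card {l : List Bool // l.length = w + 2 ∧ Charged rank w l} : ℚ)
          / 2 ^ (w + 2) := by
  gcongr
  exact_mod_cast Minimizer.le_card_charged (rank := rank) hw

/-- For every w ≥ 2 and every linear order (injective rank) on binary 2-mers, the density
of the corresponding (2,2,w)-minimizer is at least (2^w + w + 5)/2^{w+2}. -/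
theorem stmt9 (w : ℕ) (hw : 2 ≤ w) (rank : List Bool → ℕ)
    (hinj : ∀ a b : List Bool, a.length = 2 → b.length = 2 → rank a = rank b → a = b) :
    (2 ^ w + w + 5 : ℚ) / 2 ^ (w + 2)
      ≤ (Nat.card {l : List Bool // l.length = w + 2 ∧ Charged rank w l} : ℚ)
          / 2 ^ (w + 2) :=
  stmt9_general w hw rank
end

section
/- The number of binary strings of length n of the form 1^i (01)^j 0^ℓ with i, j, ℓ ≥ 0 equals ⌊n²/4⌋ + n + 1. -/
def str (i j m : ℕ) : List Bool :=
  List.replicate i true ++ (List.replicate j [false, true]).flatten ++ List.replicate m false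

lemma str_len (i j m : ℕ) : (str i j m).length = i + 2*j + m := by
  simp [str]; ring

lemma str_takeWhile (i j m : ℕ) : ((str i j m).takeWhile (fun b => b)).length = i := by
  induction i with
  | zero =>
    cases j with
    | zero => cases m with
      | zero => simp [str]
      | succ m => simp [str, List.replicate_succ]
    | succ j => simp [str, List.replicate_succ]
  | succ i ih =>
    simpa [str, List.replicate_succ, List.takeWhile_cons] using ih

lemma str_count (i j m : ℕ) : (str i j m).count true = i + j := by
  have hrep : ∀ k : ℕ, List.count true (List.replicate k false) = 0 := by
    intro k; induction k with
    | zero => simp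
    | succ k ihk => simpa [List.replicate_succ] using ihk
  induction j with
  | zero => simp [str, hrep]
  | succ j ih => simp_all [str, List.replicate_succ]

lemma str_inj {i j m i' j' m' : ℕ} (h : str i j m = str i' j' m') :
    i = i' ∧ j = j' ∧ m = m' := by
  have h1 := str_takeWhile i j m
  have h2 := str_takeWhile i' j' m'
  have h3 := str_count i j m
  have h4 := str_count i' j' m'
  have h5 := str_len i j m
  have h6 := str_len i' j' m'
  rw [h] at h1 h3 h5
  omega

lemma sum_aux (k r : ℕ) (hr : r < 2) :
    ∑ j ∈ Finset.range (k+1), (2*k + r - 2*j + 1) = (2*k+r)^2/4 + (2*k+r) + 1 := by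
  induction k with
  | zero => interval_cases r <;> simp
  | succ k ih =>
    rw [Finset.sum_range_succ']
    have hc : ∀ j ∈ Finset.range (k+1), (2*(k+1) + r - 2*(j+1) + 1) = 2*k + r - 2*j + 1 := by
      intro j _; omega
    rw [Finset.sum_congr rfl hc, ih]
    have hb : (2*(k+1)+r)^2 = (2*k+r)^2 + 8*k + 4*r + 4 := by ring
    generalize (2*k+r)^2 = a at *
    omega

noncomputable def myEquiv (n : ℕ) :
    {p : ℕ × ℕ // p.1 + 2*p.2 ≤ n} ≃ {l : List Bool // l.length = n ∧ ∃ i j m : ℕ,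
      l = List.replicate i true ++ (List.replicate j [false, true]).flatten
            ++ List.replicate m false} := by
  apply Equiv.ofBijective (fun p => ⟨str p.1.1 p.1.2 (n - p.1.1 - 2*p.1.2),
    by
      have := str_len p.1.1 p.1.2 (n - p.1.1 - 2*p.1.2)
      have := p.2
      exact ⟨by omega, p.1.1, p.1.2, n - p.1.1 - 2*p.1.2, rfl⟩⟩)
  constructor
  · rintro ⟨⟨i, j⟩, h⟩ ⟨⟨i', j'⟩, h'⟩ heq
    simp only [Subtype.mk.injEq] at heq
    obtain ⟨h1, h2, h3⟩ := str_inj heq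
    simp [h1, h2]
  · rintro ⟨l, hlen, i, j, m, hl⟩
    have hL : l.length = i + 2*j + m := by rw [hl]; exact str_len i j m
    refine ⟨⟨(i, j), by omega⟩, ?_⟩
    simp only [Subtype.mk.injEq]
    rw [hl]
    congr 1
    omega

def sigmaEquiv (n : ℕ) :
    {p : ℕ × ℕ // p.1 + 2*p.2 ≤ n} ≃ (Σ j : Fin (n/2+1), Fin (n - 2*j + 1)) where
  toFun p := ⟨⟨p.1.2, by omega⟩, ⟨p.1.1, by
    have := p.2
    simp only [Fin.val_mk]
    omega⟩⟩
  invFun q := ⟨(q.2, q.1), by have := q.1.2; have := q.2.2; omega⟩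
  left_inv p := rfl
  right_inv q := rfl

/-- The number of binary strings of length n of the form 1^i (01)^j 0^ℓ equals
⌊n²/4⌋ + n + 1. -/
theorem stmt10 (n : ℕ) :
    Nat.card {l : List Bool // l.length = n ∧ ∃ i j m : ℕ,
      l = List.replicate i true ++ (List.replicate j [false, true]).flatten
            ++ List.replicate m false}
    = n ^ 2 / 4 + n + 1 := by
  rw [← Nat.card_congr (myEquiv n), Nat.card_congr (sigmaEquiv n), Nat.card_eq_fintype_card,
    Fintype.card_sigma]
  simp only [Fintype.card_fin]
  rw [Fin.sum_univ_eq_sum_range (fun j => n - 2*j + 1)]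
  obtain ⟨k, r, hr, hn⟩ : ∃ k r, r < 2 ∧ n = 2*k + r := ⟨n/2, n%2, by omega, by omega⟩
  subst hn
  have hk : (2*k+r)/2 = k := by omega
  rw [hk]
  exact sum_aux k r hr
end

section
/- A binary string avoids both substrings 011 and 001 if and only if it has the form 1^i (01)^j 0^ℓ for some i, j, ℓ ≥ 0. -/
open List

private lemma pat_not_infix_zeros (b : Bool) (m : ℕ) :
    ¬ [false, b, true] <:+: List.replicate m false := by
  intro h
  have ht : true ∈ List.replicate m false := h.subset (by simp)
  simpa using List.eq_of_mem_replicate ht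

private lemma head_ne_true (j m : ℕ) (s : List Bool) :
    (List.replicate j [false, true]).flatten ++ List.replicate m false ≠ true :: s := by
  cases j with
  | zero => cases m <;> simp [List.replicate_succ]
  | succ j => simp [List.replicate_succ]

private lemma pat_not_infix_mid (b : Bool) (j m : ℕ) :
    ¬ [false, b, true] <:+:
      (List.replicate j [false, true]).flatten ++ List.replicate m false := by
  induction j with
  | zero => simpa using pat_not_infix_zeros b m
  | succ j ih =>
    intro h
    rw [show (List.replicate (j+1) [false, true]).flatten ++ List.replicate m false
        = false :: true :: ((List.replicate j [false, true]).flatten ++ List.replicate m false) by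
          simp [List.replicate_succ]] at h
    rw [List.infix_cons_iff] at h
    rcases h with h | h
    · obtain ⟨t, ht⟩ := h
      simp at ht
      obtain ⟨hb, ht⟩ := ht
      exact head_ne_true j m t ht.symm
    · rw [List.infix_cons_iff] at h
      rcases h with h | h
      · obtain ⟨t, ht⟩ := h
        simp at ht
      · exact ih h

private lemma pat_not_infix (b : Bool) (i j m : ℕ) :
    ¬ [false, b, true] <:+:
      List.replicate i true ++ (List.replicate j [false, true]).flatten
        ++ List.replicate m false := by
  induction i with
  | zero => simpa using pat_not_infix_mid b j m
  | succ i ih =>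
    intro h
    rw [show List.replicate (i+1) true ++ (List.replicate j [false, true]).flatten
        ++ List.replicate m false
        = true :: (List.replicate i true ++ (List.replicate j [false, true]).flatten
            ++ List.replicate m false) by simp [List.replicate_succ]] at h
    rw [List.infix_cons_iff] at h
    rcases h with h | h
    · obtain ⟨t, ht⟩ := h
      simp at ht
    · exact ih h

/-- A binary string avoids both 011 and 001 iff it has the form 1^i (01)^j 0^ℓ. -/
theorem stmt11 (l : List Bool) :
    (¬ [false, true, true] <:+: l ∧ ¬ [false, false, true] <:+: l) ↔
    ∃ i j m : ℕ,
      l = List.replicate i true ++ (List.replicate j [false, true]).flatten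
            ++ List.replicate m false := by
  constructor
  · intro h
    induction l with
    | nil => exact ⟨0, 0, 0, rfl⟩
    | cons a t ih =>
      have ht : ¬ [false, true, true] <:+: t ∧ ¬ [false, false, true] <:+: t := by
        constructor <;> intro hx
        · exact h.1 (hx.trans (List.suffix_cons a t).isInfix)
        · exact h.2 (hx.trans (List.suffix_cons a t).isInfix)
      obtain ⟨i, j, m, hform⟩ := ih ht
      cases a with
      | true => exact ⟨i + 1, j, m, by simp [List.replicate_succ, hform]⟩
      | false =>
        match i, hform with
        | 0, hform =>
          match j, hform with
          | 0, hform =>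
            simp at hform
            exact ⟨0, 0, m + 1, by simp [List.replicate_succ, hform]⟩
          | j + 1, hform =>
            exfalso
            apply h.2
            refine List.IsPrefix.isInfix ⟨(List.replicate j [false, true]).flatten
              ++ List.replicate m false, ?_⟩
            simp [hform, List.replicate_succ]
        | 1, hform =>
          refine ⟨0, j + 1, m, ?_⟩
          simp [hform, List.replicate_succ]
        | (i + 2), hform =>
          exfalso
          apply h.1
          refine List.IsPrefix.isInfix ⟨List.replicate i true
            ++ (List.replicate j [false, true]).flatten ++ List.replicate m false, ?_⟩
          simp [hform, List.replicate_succ]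
  · rintro ⟨i, j, m, rfl⟩
    exact ⟨pat_not_infix true i j m, pat_not_infix false i j m⟩
end

section
/- Let A be a square matrix over ℝ with strictly dominant eigenvalue α > 1, second largest eigenvalue absolute value |γ|, and limit matrix A∞ = lim (α^{-1}A)^n. Then for all indices u, v, the entry A^n[u,v] equals A∞[u,v]·α^n + O(n^d |γ|^n), where d is the dimension of A. -/
/-!
Since `(α⁻¹ A)ⁿ → A∞`, the limit `A∞` is idempotent and `A A∞ = A∞ A = α A∞`, so
`B = A - α A∞` satisfies `Bⁿ = Aⁿ - αⁿ A∞` for `n ≥ 1`. Write `χ_A = (X - α) q`. The matrix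
`q(B) B = q(A) B` is fixed by `α⁻¹ A`, hence by `A∞`, while `A∞ B = 0`; so `q X` annihilates `B`.
As `α` is a simple root, every complex root of `q X` has modulus at most `|γ|`. Finally, if
`∏ (X - λᵢ)` (`d` factors, `|λᵢ| ≤ g`) annihilates `B`, then peeling off one factor at a time
turns `Bⁿ` into solutions of `x (n + 1) = λ x n + y n` with `y = O(nᵏ gⁿ)`, so each factor
costs one power of `n`.
-/

open Matrix Polynomial Filter Topology Asymptotics

section TendstoPow

variable {M : Type*} [Monoid M] [TopologicalSpace M] [ContinuousMul M] [T2Space M] {T P : M}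

theorem isIdempotentElem_of_tendsto_pow (h : Tendsto (T ^ ·) atTop (𝓝 P)) :
    IsIdempotentElem P := by
  have hdouble : Tendsto (fun n => T ^ n * T ^ n) atTop (𝓝 P) := by
    simpa only [Function.comp_def, ← pow_add] using
      h.comp (tendsto_atTop_mono (fun n => Nat.le_add_left n n) tendsto_id)
  exact tendsto_nhds_unique (h.mul h) hdouble

theorem mul_eq_right_of_tendsto_pow (h : Tendsto (T ^ ·) atTop (𝓝 P)) : T * P = P := by
  have hsucc : Tendsto (fun n => T * T ^ n) atTop (𝓝 P) := by
    simpa only [← pow_succ'] using (tendsto_add_atTop_iff_nat 1).mpr h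
  exact tendsto_nhds_unique (h.const_mul T) hsucc

theorem mul_eq_left_of_tendsto_pow (h : Tendsto (T ^ ·) atTop (𝓝 P)) : P * T = P := by
  have hsucc : Tendsto (fun n => T ^ n * T) atTop (𝓝 P) := by
    simpa only [← pow_succ] using (tendsto_add_atTop_iff_nat 1).mpr h
  exact tendsto_nhds_unique (h.mul_const T) hsucc

theorem mul_eq_right_of_tendsto_pow_of_mul_eq_right (h : Tendsto (T ^ ·) atTop (𝓝 P)) {x : M}
    (hx : T * x = x) : P * x = x := by
  have hfix : ∀ n : ℕ, T ^ n * x = x := fun n => by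
    induction n with
    | zero => rw [pow_zero, one_mul]
    | succ n ih => rw [pow_succ, mul_assoc, hx, ih]
  exact tendsto_nhds_unique (h.mul_const x) (by simp only [hfix, tendsto_const_nhds])

end TendstoPow

section MulEqMulSelf

variable {R : Type*} [Ring R] {a b : R}

theorem pow_mul_eq_pow_mul_of_mul_eq_mul_self (h : a * b = b * b) (n : ℕ) :
    a ^ n * b = b ^ n * b := by
  induction n with
  | zero => rw [pow_zero, pow_zero]
  | succ n ih => rw [pow_succ, mul_assoc, h, ← mul_assoc, ih, ← pow_succ]

theorem sub_pow_succ_of_mul_eq_mul_self (h₁ : a * b = b * b) (h₂ : b * a = b * b) (n : ℕ) :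
    (a - b) ^ (n + 1) = a ^ (n + 1) - b ^ (n + 1) := by
  induction n with
  | zero => simp
  | succ n ih =>
    have hab : a ^ (n + 1) * b = b ^ (n + 2) := by
      rw [pow_mul_eq_pow_mul_of_mul_eq_mul_self h₁, ← pow_succ]
    have hba : b ^ (n + 1) * a = b ^ (n + 2) := by
      rw [pow_succ, mul_assoc, h₂, ← mul_assoc, ← pow_succ, ← pow_succ]
    rw [pow_succ, ih, sub_mul, mul_sub, mul_sub, hab, hba, ← pow_succ, ← pow_succ]
    abel

theorem aeval_mul_eq_of_mul_eq_mul_self {K : Type*} [CommSemiring K] [Algebra K R]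
    (h : a * b = b * b) (f : K[X]) : aeval a f * b = aeval b f * b := by
  induction f using Polynomial.induction_on' with
  | add p q hp hq => rw [map_add, map_add, add_mul, add_mul, hp, hq]
  | monomial n c =>
    rw [aeval_monomial, aeval_monomial, mul_assoc, mul_assoc,
      pow_mul_eq_pow_mul_of_mul_eq_mul_self h]

end MulEqMulSelf

theorem Commute.aeval_right {K R : Type*} [CommSemiring K] [Semiring R] [Algebra K R] {x y : R}
    (h : Commute x y) (f : K[X]) : Commute x (aeval y f) := by
  induction f using Polynomial.induction_on' with
  | add p q hp hq => rw [map_add]; exact hp.add_right hq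
  | monomial n c =>
    rw [aeval_monomial]
    exact (Algebra.commute_algebraMap_right c x).mul_right (h.pow_right n)

section DominantPart

variable {𝕜 R : Type*} [Field 𝕜] [Ring R] [Algebra 𝕜 R] [TopologicalSpace R] [ContinuousMul R]
  [T2Space R] {a : 𝕜} {A P : R}

theorem mul_eq_smul_of_tendsto_inv_smul_pow (ha : a ≠ 0)
    (h : Tendsto (fun n => (a⁻¹ • A) ^ n) atTop (𝓝 P)) : A * P = a • P := by
  have hP := mul_eq_right_of_tendsto_pow h
  rwa [smul_mul_assoc, inv_smul_eq_iff₀ ha] at hP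

theorem mul_eq_smul_of_tendsto_inv_smul_pow' (ha : a ≠ 0)
    (h : Tendsto (fun n => (a⁻¹ • A) ^ n) atTop (𝓝 P)) : P * A = a • P := by
  have hP := mul_eq_left_of_tendsto_pow h
  rwa [mul_smul_comm, inv_smul_eq_iff₀ ha] at hP

theorem sub_smul_pow_succ_of_tendsto_inv_smul_pow (ha : a ≠ 0)
    (h : Tendsto (fun n => (a⁻¹ • A) ^ n) atTop (𝓝 P)) (n : ℕ) :
    (A - a • P) ^ (n + 1) = A ^ (n + 1) - a ^ (n + 1) • P := by
  have hP := isIdempotentElem_of_tendsto_pow h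
  have hsq : (a • P) * (a • P) = a • a • P := by rw [smul_mul_smul_comm, hP.eq, smul_smul]
  rw [sub_pow_succ_of_mul_eq_mul_self, _root_.smul_pow, hP.pow_succ_eq]
  · rw [mul_smul_comm, mul_eq_smul_of_tendsto_inv_smul_pow ha h, hsq]
  · rw [smul_mul_assoc, mul_eq_smul_of_tendsto_inv_smul_pow' ha h, hsq]

theorem aeval_sub_smul_mul_X_eq_zero_of_tendsto_inv_smul_pow (ha : a ≠ 0)
    (h : Tendsto (fun n => (a⁻¹ • A) ^ n) atTop (𝓝 P)) {q : 𝕜[X]}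
    (hq : aeval A ((X - C a) * q) = 0) : aeval (A - a • P) (q * X) = 0 := by
  have hAP := mul_eq_smul_of_tendsto_inv_smul_pow ha h
  have hPA := mul_eq_smul_of_tendsto_inv_smul_pow' ha h
  have hP : P * P = P := isIdempotentElem_of_tendsto_pow h
  set B := A - a • P
  have hPB : P * B = 0 := by rw [mul_sub, hPA, mul_smul_comm, hP, sub_self]
  have hAB : A * B = B * B := by
    rw [← sub_eq_zero, ← sub_mul, sub_sub_cancel, smul_mul_assoc, hPB, smul_zero]
  set M := aeval A q * B
  have hAq : A * aeval A q = a • aeval A q := by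
    rwa [map_mul, map_sub, aeval_X, aeval_C, sub_mul, sub_eq_zero, ← Algebra.smul_def] at hq
  have hTM : (a⁻¹ • A) * M = M := by
    rw [smul_mul_assoc, ← mul_assoc, hAq, smul_mul_assoc, smul_smul, inv_mul_cancel₀ ha, one_smul]
  have hPM : P * M = 0 := by
    have hcomm : Commute P A := hPA.trans hAP.symm
    rw [← mul_assoc, (hcomm.aeval_right q).eq, mul_assoc, hPB, mul_zero]
  rw [map_mul, aeval_X, ← aeval_mul_eq_of_mul_eq_mul_self hAB, ← hPM,
    mul_eq_right_of_tendsto_pow_of_mul_eq_right h hTM]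

end DominantPart

section Recurrence

variable {𝕜 E : Type*} [NormedField 𝕜] [NormedAddCommGroup E] [NormedSpace 𝕜 E]
  {x y : ℕ → E} {r : 𝕜} {g c : ℝ} {k N : ℕ}

/-- Dividing by `g ^ n`, the recurrence becomes a sum of `n` terms each `O(n ^ k)`. -/
theorem norm_le_of_succ_eq_smul_add (hg : 0 < g) (hc : 0 ≤ c) (hr : ‖r‖ ≤ g)
    (hx : ∀ n, x (n + 1) = r • x n + y n) (hy : ∀ n ≥ N, ‖y n‖ ≤ c * (n ^ k * g ^ n)) :
    ∀ n ≥ N, ‖x n‖ ≤ (‖x N‖ / g ^ N + c / g * n ^ (k + 1)) * g ^ n := by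
  intro n hn
  induction n, hn using Nat.le_induction with
  | base =>
    have : 0 ≤ c / g * (N : ℝ) ^ (k + 1) * g ^ N := by positivity
    rw [add_mul, div_mul_cancel₀ _ (pow_pos hg N).ne']
    linarith
  | succ n hn ih =>
    have hstep : (n : ℝ) ^ (k + 1) + n ^ k ≤ ((n : ℝ) + 1) ^ (k + 1) := by
      calc (n : ℝ) ^ (k + 1) + n ^ k = (n : ℝ) ^ k * (n + 1) := by ring
        _ ≤ ((n : ℝ) + 1) ^ k * (n + 1) := by gcongr; linarith
        _ = ((n : ℝ) + 1) ^ (k + 1) := by ring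
    calc ‖x (n + 1)‖ = ‖r • x n + y n‖ := by rw [hx]
      _ ≤ g * ‖x n‖ + ‖y n‖ := (norm_add_le _ _).trans (by rw [norm_smul]; gcongr)
      _ ≤ g * ((‖x N‖ / g ^ N + c / g * n ^ (k + 1)) * g ^ n) + c * (n ^ k * g ^ n) := by
        gcongr
        exact hy n hn
      _ = (‖x N‖ / g ^ N + c / g * (n ^ (k + 1) + n ^ k)) * g ^ (n + 1) := by field_simp; ring
      _ ≤ (‖x N‖ / g ^ N + c / g * ((n : ℝ) + 1) ^ (k + 1)) * g ^ (n + 1) := by gcongr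
      _ = (‖x N‖ / g ^ N + c / g * ((n + 1 : ℕ) : ℝ) ^ (k + 1)) * g ^ (n + 1) := by
        push_cast; ring

theorem isBigO_pow_succ_mul_pow_of_succ_eq_smul_add (hr : ‖r‖ ≤ g)
    (hx : ∀ n, x (n + 1) = r • x n + y n) (hy : y =O[atTop] fun n => (n : ℝ) ^ k * g ^ n) :
    x =O[atTop] fun n => (n : ℝ) ^ (k + 1) * g ^ n := by
  rcases (norm_nonneg r).trans hr |>.eq_or_lt with rfl | hg
  · have hr0 : r = 0 := norm_le_zero_iff.mp hr
    have hy0 : y =ᶠ[atTop] 0 := by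
      refine isBigO_zero_right_iff.mp (hy.congr' EventuallyEq.rfl ?_)
      filter_upwards [eventually_ge_atTop 1] with n hn
      rw [zero_pow (by omega), mul_zero]
    have hx0 : x =ᶠ[atTop] 0 := by
      filter_upwards [(tendsto_sub_atTop_nat 1).eventually hy0, eventually_ge_atTop 1]
        with n hn hn1
      rw [← Nat.sub_add_cancel hn1, hx, hr0, zero_smul, zero_add]
      exact hn
    exact hx0.trans_isBigO (isBigO_zero _ _)
  · obtain ⟨c, hc, hyc⟩ := hy.exists_pos
    obtain ⟨N, hN⟩ := eventually_atTop.mp hyc.bound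
    have hbound := norm_le_of_succ_eq_smul_add hg hc.le hr hx fun n hn => by
      simpa [abs_of_nonneg hg.le] using hN n hn
    set D := ‖x N‖ / g ^ N
    refine IsBigO.of_bound (D + c / g) ?_
    filter_upwards [eventually_ge_atTop N, eventually_ge_atTop 1] with n hnN hn1
    have hn : (1 : ℝ) ≤ (n : ℝ) ^ (k + 1) := one_le_pow₀ (by exact_mod_cast hn1)
    have hD : 0 ≤ D * g ^ n := by positivity
    rw [Real.norm_of_nonneg (by positivity)]
    calc ‖x n‖ ≤ (D + c / g * n ^ (k + 1)) * g ^ n := hbound n hnN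
      _ ≤ (D + c / g) * (n ^ (k + 1) * g ^ n) := by nlinarith

end Recurrence

section Annihilated

variable {𝕜 E : Type*} [NormedField 𝕜] [NormedAddCommGroup E] [NormedSpace 𝕜 E]

theorem isBigO_map_pow_mul_of_aeval_prod_mul_eq_zero {R : Type*} [Ring R] [Algebra 𝕜 R]
    (φ : R →ₗ[𝕜] E) (b : R) {g : ℝ} (s : Multiset 𝕜) (hs : ∀ r ∈ s, ‖r‖ ≤ g) {w : R}
    (hw : aeval b (s.map fun r => X - C r).prod * w = 0) :
    (fun n : ℕ => φ (b ^ n * w)) =O[atTop] fun n => (n : ℝ) ^ Multiset.card s * g ^ n := by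
  induction s using Multiset.induction_on generalizing w with
  | empty =>
    rw [Multiset.map_zero, Multiset.prod_zero, map_one, one_mul] at hw
    simp only [hw, mul_zero, map_zero]
    exact isBigO_zero _ _
  | cons r s ih =>
    rw [Multiset.map_cons, Multiset.prod_cons, mul_comm, map_mul, mul_assoc] at hw
    rw [Multiset.card_cons]
    refine isBigO_pow_succ_mul_pow_of_succ_eq_smul_add (hs r (Multiset.mem_cons_self r s))
      (fun n => ?_) (ih (fun r' hr' => hs r' (Multiset.mem_cons_of_mem hr')) hw)
    rw [map_sub, aeval_X, aeval_C, sub_mul, mul_sub, ← mul_assoc, ← pow_succ, ← Algebra.smul_def,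
      mul_smul_comm, map_sub, map_smul, add_sub_cancel]

end Annihilated

theorem Matrix.isBigO_pow_apply_of_aeval_eq_zero {ι : Type*} [Fintype ι] [DecidableEq ι]
    (B : Matrix ι ι ℝ) {f : ℝ[X]} (hf : f.Monic) (hB : aeval B f = 0) {g : ℝ}
    (hroots : ∀ z ∈ (f.map (algebraMap ℝ ℂ)).roots, ‖z‖ ≤ g) (u v : ι) :
    (fun n : ℕ => (B ^ n) u v) =O[atTop] fun n => (n : ℝ) ^ f.natDegree * g ^ n := by
  set F : Matrix ι ι ℝ →ₐ[ℝ] Matrix ι ι ℂ := Complex.ofRealAm.mapMatrix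
  set fC := f.map (algebraMap ℝ ℂ)
  have hfC : fC = (fC.roots.map fun r => X - C r).prod :=
    (IsAlgClosed.splits fC).eq_prod_roots_of_monic (hf.map _)
  have hBC : aeval (F B) (fC.roots.map fun r => X - C r).prod * 1 = 0 := by
    rw [← hfC, mul_one, aeval_map_algebraMap, aeval_algHom_apply, hB, map_zero]
  have hentry := isBigO_map_pow_mul_of_aeval_prod_mul_eq_zero (Matrix.entryLinearMap ℂ ℂ u v)
    (F B) _ hroots hBC
  rw [IsAlgClosed.card_roots_eq_natDegree, natDegree_map] at hentry
  refine isBigO_norm_left.mp ((isBigO_norm_left.mpr hentry).congr_left fun n => ?_)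
  rw [mul_one, ← map_pow]
  simp [F]

theorem Polynomial.norm_le_of_mem_roots_mul_X {𝕜 : Type*} [NormedField 𝕜] [DecidableEq 𝕜]
    {Q : 𝕜[X]} {a : 𝕜} {g : ℝ} (hQ : Q ≠ 0) (hg : 0 ≤ g)
    (hsimple : ((X - C a) * Q).roots.count a = 1)
    (hdom : ∀ z ∈ ((X - C a) * Q).roots, z ≠ a → ‖z‖ ≤ g) : ∀ z ∈ (Q * X).roots, ‖z‖ ≤ g := by
  have hroots : ((X - C a) * Q).roots = a ::ₘ Q.roots := by
    rw [roots_mul (mul_ne_zero (X_sub_C_ne_zero a) hQ), roots_X_sub_C, Multiset.singleton_add]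
  intro z hz
  rw [roots_mul (mul_ne_zero hQ X_ne_zero), roots_X, Multiset.mem_add,
    Multiset.mem_singleton] at hz
  rcases hz with hz | rfl
  · refine hdom z (hroots ▸ Multiset.mem_cons_of_mem hz) ?_
    rintro rfl
    rw [hroots, Multiset.count_cons_self, add_eq_right, Multiset.count_eq_zero] at hsimple
    exact hsimple hz
  · rwa [norm_zero]

theorem Polynomial.Monic.exists_eq_X_sub_C_mul_of_mem_roots_map {K L : Type*} [Field K] [Field L]
    [Algebra K L] {p : K[X]} (hp : p.Monic) {a : K}
    (ha : algebraMap K L a ∈ (p.map (algebraMap K L)).roots) :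
    ∃ q : K[X], q.Monic ∧ p = (X - C a) * q := by
  have hroot : p.IsRoot a :=
    IsRoot.of_map ((mem_roots (hp.map _).ne_zero).mp ha) (algebraMap K L).injective
  obtain ⟨q, hq⟩ := dvd_iff_isRoot.mpr hroot
  exact ⟨q, (monic_X_sub_C a).of_mul_monic_left (hq ▸ hp), hq⟩

/-- If A has strictly dominant eigenvalue α > 1, all other eigenvalues of absolute value
at most |γ|, and limit matrix A∞ = lim (α⁻¹A)^n, then each entry satisfies
A^n[u,v] = A∞[u,v]·αⁿ + O(n^d |γ|ⁿ). -/
theorem stmt13 (d : ℕ) (A : Matrix (Fin d) (Fin d) ℝ) (α γ : ℝ) (hα : 1 < α)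
    (hsimple : ((A.charpoly.map (algebraMap ℝ ℂ)).roots.count (α : ℂ)) = 1)
    (hdom : ∀ z ∈ (A.charpoly.map (algebraMap ℝ ℂ)).roots, z ≠ (α : ℂ) → ‖z‖ ≤ |γ|)
    (Ainf : Matrix (Fin d) (Fin d) ℝ)
    (hlim : Filter.Tendsto (fun n : ℕ => (α⁻¹ • A) ^ n) Filter.atTop (nhds Ainf)) :
    ∀ u v : Fin d,
      Asymptotics.IsBigO Filter.atTop
        (fun n : ℕ => (A ^ n) u v - Ainf u v * α ^ n)
        (fun n : ℕ => (n : ℝ) ^ d * |γ| ^ n) := by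
  intro u v
  have hα0 : α ≠ 0 := (zero_lt_one.trans hα).ne'
  obtain ⟨q, hqm, hq⟩ := A.charpoly_monic.exists_eq_X_sub_C_mul_of_mem_roots_map
    (L := ℂ) (a := α) (Multiset.count_pos.mp (hsimple ▸ one_pos))
  have hann := aeval_sub_smul_mul_X_eq_zero_of_tendsto_inv_smul_pow hα0 hlim
    (hq ▸ A.aeval_self_charpoly)
  have hroots : ∀ z ∈ ((q * X).map (algebraMap ℝ ℂ)).roots, ‖z‖ ≤ |γ| := by
    rw [hq, Polynomial.map_mul, Polynomial.map_sub, map_X, map_C] at hsimple hdom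
    rw [Polynomial.map_mul, map_X]
    exact norm_le_of_mem_roots_mul_X (hqm.map _).ne_zero (abs_nonneg γ) hsimple hdom
  have hdeg : (q * X).natDegree = d := by
    have := A.charpoly_natDegree_eq_dim
    rw [hq, (monic_X_sub_C α).natDegree_mul hqm, natDegree_X_sub_C, Fintype.card_fin] at this
    rw [hqm.natDegree_mul monic_X, natDegree_X]
    omega
  have hB := (A - α • Ainf).isBigO_pow_apply_of_aeval_eq_zero (hqm.mul monic_X) hann hroots u v
  rw [hdeg] at hB
  refine hB.congr' ?_ EventuallyEq.rfl
  filter_upwards [eventually_ge_atTop 1] with n hn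
  obtain ⟨m, rfl⟩ := Nat.exists_eq_add_of_le' hn
  rw [sub_smul_pow_succ_of_tendsto_inv_smul_pow hα0 hlim, Matrix.sub_apply, Matrix.smul_apply,
    smul_eq_mul, mul_comm]
end

section
/- Let ρ be a linear order on binary 2-mers with ρ[1] = 00 and let w ≥ 2. Then the number of charged windows of length w+2 is at least 2^w + 2·Φ_{w−1} + 3, where Φ is the Fibonacci sequence with Φ_0 = 1, Φ_1 = 2. -/
/-- Fibonacci-like sequence: Φ₀ = 1, Φ₁ = 2, Φ_{n+2} = Φ_{n+1} + Φ_n. -/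
def phi : ℕ → ℕ
  | 0 => 1
  | 1 => 2
  | n + 2 => phi (n + 1) + phi n

lemma kmerAt_eq (l : List Bool) (i : ℕ) (h : i + 1 < l.length) :
    kmerAt l i = [l[i], l[i+1]] := by
  have h1 : l.drop i = l[i] :: l.drop (i+1) := List.drop_eq_getElem_cons (by omega)
  have h2 : l.drop (i+1) = l[i+1] :: l.drop (i+2) := List.drop_eq_getElem_cons h
  unfold kmerAt
  rw [h1, h2]
  rfl

lemma phi_pos (n : ℕ) : 1 ≤ phi n := by
  induction n using Nat.strong_induction_on with
  | _ n ih =>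
    match n with
    | 0 => simp [phi]
    | 1 => simp [phi]
    | n+2 => rw [phi]; have := ih n (by omega); omega

lemma phi_eq (n : ℕ) (h : 2 ≤ n) : phi n = phi (n-1) + phi (n-2) := by
  obtain ⟨m, rfl⟩ : ∃ m, n = m + 2 := ⟨n - 2, by omega⟩
  simp [phi]

/-- no two adjacent `false`s -/
def NoFF (l : List Bool) : Prop :=
  ∀ i, (h : i + 1 < l.length) → l[i] = true ∨ l[i+1] = true

lemma noFF_cons (b : Bool) (l : List Bool) (h : NoFF l)
    (hb : b = true ∨ (∀ (h0 : 0 < l.length), l[0] = true)) : NoFF (b :: l) := by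
  intro i hi
  match i with
  | 0 =>
    rcases hb with hb | hb
    · exact Or.inl hb
    · exact Or.inr (by simpa using hb (by simpa using hi))
  | i+1 =>
    simpa using h i (by simpa using hi)

lemma noFF_append_single (l : List Bool) (h : NoFF l) : NoFF (l ++ [true]) := by
  intro i hi
  simp at hi
  by_cases hc : i + 1 < l.length
  · rcases h i hc with h' | h'
    · left; rwa [List.getElem_append_left (by omega)]
    · right; rwa [List.getElem_append_left (by omega)]
  · right
    have : i + 1 = l.length := by omega
    rw [List.getElem_append_right (by omega)]
    simp [this]

/-- all binary lists of length n -/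
noncomputable def allB (n : ℕ) : Finset (List Bool) :=
  Finset.image (fun v : List.Vector Bool n => v.toList) Finset.univ

lemma allB_card (n : ℕ) : (allB n).card = 2 ^ n := by
  rw [allB, Finset.card_image_of_injective _ (fun a b h => List.Vector.toList_injective h)]
  simp [card_vector]

lemma allB_len {n : ℕ} {l : List Bool} (h : l ∈ allB n) : l.length = n := by
  simp only [allB, Finset.mem_image] at h
  obtain ⟨v, -, rfl⟩ := h
  simp

/-- binary lists of length n avoiding 00 -/
def noc : ℕ → Finset (List Bool)
  | 0 => {[]}
  | 1 => {[false], [true]}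
  | n + 2 =>
      ((noc (n+1)).image (List.cons true)) ∪ ((noc n).image (fun l => false :: true :: l))

lemma noc_card (n : ℕ) : (noc n).card = phi n := by
  induction n using Nat.strong_induction_on with
  | _ n ih =>
    match n with
    | 0 => simp [noc, phi]
    | 1 => simp [noc, phi]
    | n+2 =>
      rw [noc, phi, Finset.card_union_of_disjoint, Finset.card_image_of_injective,
        Finset.card_image_of_injective, ih (n+1) (by omega), ih n (by omega)]
      · intro a b hab; simpa using hab
      · intro a b hab; simpa using hab
      · rw [Finset.disjoint_left]
        rintro a ha hb
        simp only [Finset.mem_image] at ha hb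
        obtain ⟨x, -, rfl⟩ := ha
        obtain ⟨y, -, hy⟩ := hb
        simp at hy

lemma noc_spec (n : ℕ) : ∀ l ∈ noc n, l.length = n ∧ NoFF l := by
  induction n using Nat.strong_induction_on with
  | _ n ih =>
    match n with
    | 0 =>
      intro l hl
      simp only [noc, Finset.mem_singleton] at hl
      subst hl
      exact ⟨rfl, fun i hi => by simp at hi⟩
    | 1 =>
      intro l hl
      simp only [noc, Finset.mem_insert, Finset.mem_singleton] at hl
      rcases hl with rfl | rfl <;> exact ⟨rfl, fun i hi => by simp at hi⟩
    | n+2 =>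
      intro l hl
      rw [noc, Finset.mem_union] at hl
      rcases hl with hl | hl <;> simp only [Finset.mem_image] at hl
      · obtain ⟨t, ht, rfl⟩ := hl
        obtain ⟨hlen, hff⟩ := ih (n+1) (by omega) t ht
        refine ⟨by simp [hlen], noFF_cons _ _ hff (Or.inl rfl)⟩
      · obtain ⟨t, ht, rfl⟩ := hl
        obtain ⟨hlen, hff⟩ := ih n (by omega) t ht
        refine ⟨by simp [hlen], ?_⟩
        refine noFF_cons _ _ (noFF_cons _ _ hff (Or.inl rfl)) (Or.inr ?_)
        intro h0
        simp

lemma kmer_len2 {l : List Bool} {w : ℕ} (hlen : l.length = w + 2) {i : ℕ} (hi : i ≤ w) :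
    (kmerAt l i).length = 2 := by
  rw [kmerAt_eq l i (by omega)]
  rfl

lemma kmer_ne_ff {l : List Bool} {w : ℕ} (hlen : l.length = w + 2) (hff : NoFF l)
    {i : ℕ} (hi : i ≤ w) : kmerAt l i ≠ [false, false] := by
  rw [kmerAt_eq l i (by omega)]
  rcases hff i (by omega) with h | h <;> simp [h]

lemma min3 (rank : List Bool → ℕ) (m : List Bool)
    (h1 : rank m ≤ rank [false, true]) (h2 : rank m ≤ rank [true, false])
    (h3 : rank m ≤ rank [true, true]) :
    ∀ x : List Bool, x.length = 2 → x ≠ [false, false] → rank m ≤ rank x := by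
  intro x hx hne
  obtain ⟨a, b, rfl⟩ := List.length_eq_two.mp hx
  cases a <;> cases b <;> simp_all

lemma charged_prefix {rank : List Bool → ℕ} {w : ℕ} {l : List Bool}
    (hlen : l.length = w + 2) (hff : NoFF l)
    (hmin : ∀ x : List Bool, x.length = 2 → x ≠ [false, false] → rank (kmerAt l 0) ≤ rank x) :
    Charged rank w l :=
  Or.inl fun i hi => hmin _ (kmer_len2 hlen hi) (kmer_ne_ff hlen hff hi)

section families
variable {rank : List Bool → ℕ} {w : ℕ}

lemma charged_F1 (h00 : ∀ b : List Bool, b.length = 2 → rank [false, false] ≤ rank b)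
    {t : List Bool} (ht : t.length = w) :
    Charged rank w (false :: false :: t) := by
  have hlen : (false :: false :: t).length = w + 2 := by simp [ht]
  exact Or.inl fun i hi => by
    rw [kmerAt_eq _ 0 (by omega)]
    exact h00 _ (kmer_len2 hlen hi)

lemma charged_F2 (h00 : ∀ b : List Bool, b.length = 2 → rank [false, false] ≤ rank b)
    {t : List Bool} (ht : t.length = w - 1) (htff : NoFF t) (hw : 2 ≤ w) :
    Charged rank w (t ++ [true, false, false]) := by
  set u : List Bool := t ++ [true] with hu
  have hul : u.length = w := by simp [hu, ht]; omega
  have huff : NoFF u := noFF_append_single t htff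
  have hL : t ++ [true, false, false] = u ++ [false, false] := by simp [hu]
  rw [hL]
  have hlen : (u ++ [false, false]).length = w + 2 := by simp [hul]
  have hgetu : ∀ j, (hj : j < w) → (u ++ [false, false])[j]'(by omega) = u[j]'(by omega) :=
    fun j hj => List.getElem_append_left (by omega)
  have hkw : kmerAt (u ++ [false, false]) w = [false, false] := by
    rw [kmerAt_eq _ w (by omega)]
    rw [List.getElem_append_right (by omega), List.getElem_append_right (by omega)]
    simp [hul]
  refine Or.inr ⟨fun i hi => ?_, fun i hi => ?_⟩
  · rw [hkw]; exact h00 _ (kmer_len2 hlen (by omega))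
  · rw [hkw, kmerAt_eq _ i (by omega)]
    by_cases hc : i + 1 < w
    · rw [hgetu i (by omega), hgetu (i+1) (by omega)]
      rcases huff i (by omega) with h | h <;> simp [h]
    · have hi1 : i + 1 = w := by omega
      rw [hgetu i (by omega)]
      have hit : i = t.length := by omega
      have : u[i]'(by omega) = true := by
        simp only [hu, hit]
        rw [List.getElem_append_right (by omega)]
        simp
      simp [this]
end families

lemma card_le_subtype (w : ℕ) (P : List Bool → Prop) (F : Finset (List Bool))
    (hF : ∀ l ∈ F, l.length = w + 2 ∧ P l) :
    F.card ≤ Nat.card {l : List Bool // l.length = w + 2 ∧ P l} := by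
  haveI : Finite {l : List Bool // l.length = w + 2 ∧ P l} := by
    have h1 : {l : List Bool | l.length = w + 2 ∧ P l}.Finite :=
      (List.finite_length_eq Bool (w+2)).subset (fun l hl => hl.1)
    exact h1.to_subtype
  have hinj : Function.Injective
      (fun x : {x // x ∈ F} => (⟨x.1, hF x.1 x.2⟩ : {l : List Bool // l.length = w + 2 ∧ P l})) := by
    intro a b h
    simp only [Subtype.mk.injEq] at h
    exact Subtype.ext h
  have := Nat.card_le_card_of_injective _ hinj
  simpa [Nat.card_eq_fintype_card, Fintype.card_coe] using this

def mkW (w : ℕ) (g : ℕ → Bool) : List Bool := List.ofFn (fun j : Fin (w+2) => g j)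

lemma mkW_len (w : ℕ) (g : ℕ → Bool) : (mkW w g).length = w + 2 := by simp [mkW]

lemma mkW_get (w : ℕ) (g : ℕ → Bool) (j : ℕ) (h : j < w + 2) :
    (mkW w g)[j]'(by rw [mkW_len]; omega) = g j := by
  simp only [mkW, List.getElem_ofFn]

lemma mkW_kmer (w : ℕ) (g : ℕ → Bool) (i : ℕ) (hi : i ≤ w) :
    kmerAt (mkW w g) i = [g i, g (i+1)] := by
  rw [kmerAt_eq _ i (by rw [mkW_len]; omega), mkW_get w g i (by omega),
    mkW_get w g (i+1) (by omega)]

lemma mkW_noFF (w : ℕ) (g : ℕ → Bool) (h : ∀ j ≤ w, g j = true ∨ g (j+1) = true) :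
    NoFF (mkW w g) := by
  intro i hi
  rw [mkW_len] at hi
  rw [mkW_get w g i (by omega), mkW_get w g (i+1) (by omega)]
  exact h i (by omega)

lemma noFF_get? {l : List Bool} (h : NoFF l) {i : ℕ} (hi : i + 1 < l.length) :
    l[i]? = some true ∨ l[i+1]? = some true := by
  rcases h i hi with h' | h'
  · left; rw [List.getElem?_eq_getElem (by omega), h']
  · right; rw [List.getElem?_eq_getElem (by omega), h']

lemma master (w : ℕ) (hw : 2 ≤ w) (rank : List Bool → ℕ)
    (h00 : ∀ b : List Bool, b.length = 2 → rank [false, false] ≤ rank b)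
    (G : Finset (List Bool))
    (hGcard : phi (w-1) + 3 ≤ G.card)
    (hG : ∀ l ∈ G, l.length = w + 2 ∧ NoFF l ∧ Charged rank w l) :
    2 ^ w + 2 * phi (w-1) + 3
      ≤ Nat.card {l : List Bool // l.length = w + 2 ∧ Charged rank w l} := by
  classical
  set F1 : Finset (List Bool) := (allB w).image (fun t => false :: false :: t) with hF1def
  set F2 : Finset (List Bool) := (noc (w-1)).image (fun t => t ++ [true, false, false]) with hF2def
  -- facts about F1 members
  have memF1 : ∀ l ∈ F1, l[0]? = some false ∧ l[1]? = some false ∧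
      l.length = w + 2 ∧ Charged rank w l := by
    intro l hl
    simp only [hF1def, Finset.mem_image] at hl
    obtain ⟨t, ht, rfl⟩ := hl
    have htl := allB_len ht
    exact ⟨by simp, by simp, by simp [htl], charged_F1 h00 htl⟩
  -- facts about F2 members
  have memF2 : ∀ l ∈ F2, (l[0]? = some true ∨ l[1]? = some true) ∧
      l[w]? = some false ∧ l[w+1]? = some false ∧
      l.length = w + 2 ∧ Charged rank w l := by
    intro l hl
    simp only [hF2def, Finset.mem_image] at hl
    obtain ⟨t, ht, rfl⟩ := hl
    obtain ⟨htl, htff⟩ := noc_spec (w-1) t ht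
    have hL : t ++ [true, false, false] = (t ++ [true]) ++ [false, false] := by simp
    have hul : (t ++ [true]).length = w := by simp [htl]; omega
    have huff : NoFF (t ++ [true]) := noFF_append_single t htff
    constructor
    · rw [hL]
      rcases noFF_get? huff (i := 0) (by omega) with h' | h'
      · left; rw [List.getElem?_append_left (by omega)]; exact h'
      · right; rw [List.getElem?_append_left (by omega)]; exact h'
    refine ⟨?_, ?_, by simp [htl]; omega, charged_F2 h00 htl htff hw⟩
    · rw [hL, List.getElem?_append_right (by omega)]
      rw [hul]
      simp
    · rw [hL, List.getElem?_append_right (by omega)]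
      rw [hul]
      simp
  -- G member facts
  have memG : ∀ l ∈ G, (∀ i, i + 1 < l.length → ¬(l[i]? = some false ∧ l[i+1]? = some false)) ∧
      l.length = w + 2 ∧ Charged rank w l := by
    intro l hl
    obtain ⟨h1, h2, h3⟩ := hG l hl
    refine ⟨?_, h1, h3⟩
    intro i hi hcon
    obtain ⟨hc1, hc2⟩ := hcon
    rcases noFF_get? h2 hi with h' | h'
    · rw [hc1] at h'; simp at h'
    · rw [hc2] at h'; simp at h'
  have hcard1 : F1.card = 2 ^ w := by
    rw [hF1def, Finset.card_image_of_injective _ (fun a b h => by simpa using h)]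
    exact allB_card w
  have hcard2 : F2.card = phi (w-1) := by
    rw [hF2def, Finset.card_image_of_injective _ (fun a b h => by simpa using h)]
    exact noc_card (w-1)
  have d12 : Disjoint F1 F2 := by
    rw [Finset.disjoint_left]
    intro l h1 h2
    obtain ⟨ha, hb, -, -⟩ := memF1 l h1
    rcases (memF2 l h2).1 with h' | h'
    · rw [ha] at h'; simp at h'
    · rw [hb] at h'; simp at h'
  have d1G : Disjoint F1 G := by
    rw [Finset.disjoint_left]
    intro l h1 h2
    obtain ⟨ha, hb, hlen, -⟩ := memF1 l h1
    exact (memG l h2).1 0 (by omega) ⟨ha, hb⟩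
  have d2G : Disjoint F2 G := by
    rw [Finset.disjoint_left]
    intro l h1 h2
    obtain ⟨-, ha, hb, hlen, -⟩ := memF2 l h1
    exact (memG l h2).1 w (by omega) ⟨ha, hb⟩
  have hcardF : (F1 ∪ F2 ∪ G).card = 2 ^ w + phi (w-1) + G.card := by
    rw [Finset.card_union_of_disjoint (by rw [Finset.disjoint_union_left]; exact ⟨d1G, d2G⟩),
      Finset.card_union_of_disjoint d12, hcard1, hcard2]
  have hsub := card_le_subtype w (Charged rank w) (F1 ∪ F2 ∪ G) ?_
  · omega
  · intro l hl
    rcases Finset.mem_union.mp hl with hl' | hl'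
    · rcases Finset.mem_union.mp hl' with h | h
      · obtain ⟨-, -, h1, h2⟩ := memF1 l h; exact ⟨h1, h2⟩
      · obtain ⟨-, -, -, h1, h2⟩ := memF2 l h; exact ⟨h1, h2⟩
    · obtain ⟨-, h1, h2⟩ := memG l hl'; exact ⟨h1, h2⟩

lemma charged_suffix_min {rank : List Bool → ℕ} {w : ℕ} {l : List Bool}
    (hlen : l.length = w + 2) (hff : NoFF l)
    (hmin : ∀ x : List Bool, x.length = 2 → x ≠ [false, false] → rank (kmerAt l w) ≤ rank x)
    (huniq : ∀ i < w, kmerAt l i ≠ kmerAt l w) : Charged rank w l :=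
  Or.inr ⟨fun i hi => hmin _ (kmer_len2 hlen hi) (kmer_ne_ff hlen hff hi), huniq⟩

lemma kmer0_cons (a b : Bool) (t : List Bool) : kmerAt (a :: b :: t) 0 = [a, b] := rfl

lemma flip_parity (b : Bool) (j : ℕ) :
    (b.xor (decide ((j+1) % 2 = 1))) = !(b.xor (decide (j % 2 = 1))) := by
  rcases Nat.even_or_odd j with he | he
  · have h1 : j % 2 = 0 := Nat.even_iff.mp he
    have h2 : (j + 1) % 2 = 1 := by omega
    rw [h1, h2]
    cases b <;> rfl
  · have h1 : j % 2 = 1 := Nat.odd_iff.mp he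
    have h2 : (j + 1) % 2 = 0 := by omega
    rw [h1, h2]
    cases b <;> rfl

def gAlt (w : ℕ) : ℕ → Bool := fun j => if j < w then decide ((w - j) % 2 = 0) else true
def gRep : ℕ → Bool := fun _ => true
def g01 (w : ℕ) : ℕ → Bool := fun j => if j < w then true else if j = w then false else true
def g5 (w : ℕ) : ℕ → Bool := fun j => if j ≤ w then true else false
def g6 (w : ℕ) : ℕ → Bool := fun j => if j = 0 then false else if j ≤ w then true else false
def gB (b : Bool) : ℕ → Bool := fun j => b.xor (decide (j % 2 = 1))

lemma mkW_get? (w : ℕ) (g : ℕ → Bool) (j : ℕ) (h : j < w + 2) :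
    (mkW w g)[j]? = some (g j) := by
  rw [List.getElem?_eq_getElem (by rw [mkW_len]; omega), mkW_get w g j h]

lemma charged_rep (rank : List Bool → ℕ) (w : ℕ) : Charged rank w (mkW w gRep) := by
  refine Or.inl fun i hi => ?_
  rw [mkW_kmer w gRep 0 (by omega), mkW_kmer w gRep i hi]
  simp [gRep]

lemma noFF_rep (w : ℕ) : NoFF (mkW w gRep) :=
  mkW_noFF w gRep (fun j _ => Or.inl rfl)

lemma gB_succ (b : Bool) (j : ℕ) : gB b (j+1) = !(gB b j) := flip_parity b j

lemma charged_gB (rank : List Bool → ℕ) (w : ℕ) (b : Bool)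
    (hb : rank [b, !b] ≤ rank [!b, b]) : Charged rank w (mkW w (gB b)) := by
  refine Or.inl fun i hi => ?_
  rw [mkW_kmer w (gB b) 0 (by omega), mkW_kmer w (gB b) i hi]
  have h0 : gB b 0 = b := by simp [gB]
  have h1 : gB b 1 = !b := by simp [gB]
  have h2 : gB b (i+1) = !(gB b i) := gB_succ b i
  rw [h0, h1, h2]
  by_cases hgb : gB b i = b
  · rw [hgb]
  · have hgb' : gB b i = !b := by cases b <;> simp_all
    rw [hgb']
    simpa using hb

lemma noFF_gB (w : ℕ) (b : Bool) : NoFF (mkW w (gB b)) := by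
  refine mkW_noFF w (gB b) (fun j _ => ?_)
  rw [gB_succ b j]
  cases gB b j
  · right; rfl
  · left; rfl

lemma scenario11 (w : ℕ) (hw : 2 ≤ w) (rank : List Bool → ℕ)
    (h00 : ∀ b : List Bool, b.length = 2 → rank [false, false] ≤ rank b)
    (h1 : rank [true, true] ≤ rank [false, true])
    (h2 : rank [true, true] ≤ rank [true, false]) :
    2 ^ w + 2 * phi (w-1) + 3
      ≤ Nat.card {l : List Bool // l.length = w + 2 ∧ Charged rank w l} := by
  classical
  obtain ⟨b, hb⟩ : ∃ b : Bool, rank [b, !b] ≤ rank [!b, b] := by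
    rcases le_total (rank [false, true]) (rank [true, false]) with h | h
    · exact ⟨false, by simpa using h⟩
    · exact ⟨true, by simpa using h⟩
  set I : Finset (List Bool) := (noc w).image (fun t => true :: true :: t) with hIdef
  set A : List Bool := mkW w (gAlt w) with hAdef
  set B : List Bool := mkW w (gB b) with hBdef
  -- facts about gAlt values
  have hgAw : gAlt w w = true := by simp [gAlt]
  have hgAw1 : gAlt w (w+1) = true := by simp [gAlt]
  have hgA0 : gAlt w 1 = !(gAlt w 0) := by
    have e0 : gAlt w 0 = decide (w % 2 = 0) := by simp [gAlt]; omega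
    have e1 : gAlt w 1 = decide ((w-1) % 2 = 0) := by simp [gAlt]; omega
    rw [e0, e1]
    by_cases hp : w % 2 = 0
    · have : ¬((w-1) % 2 = 0) := by omega
      simp [hp, this]
    · have : (w-1) % 2 = 0 := by omega
      simp [hp, this]
  have hnoffA : NoFF A := by
    refine mkW_noFF w (gAlt w) (fun j hj => ?_)
    by_cases hc : j < w
    · by_cases hp : (w - j) % 2 = 0
      · left; simp [gAlt, hc, hp]
      · right
        by_cases hc1 : j + 1 < w
        · have : (w - (j+1)) % 2 = 0 := by omega
          simp [gAlt, hc1, this]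
        · simp [gAlt, hc1]
    · left; simp [gAlt, hc]
  have hkwA : kmerAt A w = [true, true] := by
    rw [hAdef, mkW_kmer w (gAlt w) w le_rfl, hgAw, hgAw1]
  have hlenA : A.length = w + 2 := mkW_len w _
  have hchA : Charged rank w A := by
    refine charged_suffix_min hlenA hnoffA ?_ ?_
    · rw [hkwA]; exact min3 rank [true, true] h1 h2 le_rfl
    · intro i hi
      rw [hAdef, mkW_kmer w (gAlt w) i (by omega), hkwA]
      by_cases hp : (w - i) % 2 = 0
      · have hc1 : i + 1 < w := by omega
        have : ¬((w - (i+1)) % 2 = 0) := by omega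
        simp [gAlt, hc1, this]
      · simp [gAlt, hi, hp]
  -- facts about B
  have hlenB : B.length = w + 2 := mkW_len w _
  have hnoffB : NoFF B := noFF_gB w b
  have hchB : Charged rank w B := charged_gB rank w b hb
  have hBpair : ∀ j ≤ w, ¬((mkW w (gB b))[j]? = some true ∧ (mkW w (gB b))[j+1]? = some true) := by
    intro j hj hcon
    rw [mkW_get? w _ j (by omega), mkW_get? w _ (j+1) (by omega)] at hcon
    obtain ⟨c1, c2⟩ := hcon
    simp only [Option.some_inj] at c1 c2
    rw [gB_succ b j, c1] at c2
    simp at c2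
  -- membership facts for I
  have memI : ∀ l ∈ I, l[0]? = some true ∧ l[1]? = some true ∧
      l.length = w + 2 ∧ NoFF l ∧ Charged rank w l := by
    intro l hl
    simp only [hIdef, Finset.mem_image] at hl
    obtain ⟨t, ht, rfl⟩ := hl
    obtain ⟨htl, htff⟩ := noc_spec w t ht
    have hff : NoFF (true :: true :: t) :=
      noFF_cons _ _ (noFF_cons _ _ htff (Or.inl rfl)) (Or.inl rfl)
    refine ⟨by simp, by simp, by simp [htl], hff, ?_⟩
    refine charged_prefix (by simp [htl]) hff ?_
    rw [kmer0_cons]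
    exact min3 rank [true, true] h1 h2 le_rfl
  -- disjointness within G
  have hANotTT : ¬(A[0]? = some true ∧ A[1]? = some true) := by
    rw [hAdef, mkW_get? w _ 0 (by omega), mkW_get? w _ 1 (by omega)]
    rintro ⟨c1, c2⟩
    simp only [Option.some_inj] at c1 c2
    rw [hgA0, c1] at c2
    simp at c2
  have hdIA : A ∉ I := fun h => hANotTT ⟨(memI A h).1, (memI A h).2.1⟩
  have hdIB : B ∉ I := fun h => hBpair 0 (by omega) ⟨(memI B h).1, (memI B h).2.1⟩
  have hdAB : A ≠ B := by
    intro h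
    apply hBpair w le_rfl
    rw [← hBdef, ← h, hAdef, mkW_get? w _ w (by omega), mkW_get? w _ (w+1) (by omega),
      hgAw, hgAw1]
    exact ⟨rfl, rfl⟩
  set G : Finset (List Bool) := insert A (insert B I) with hGdef
  have hGcard : phi (w-1) + 3 ≤ G.card := by
    rw [hGdef, Finset.card_insert_of_notMem (by simp [hdIA, hdAB]),
      Finset.card_insert_of_notMem (by simp [hdIB]),
      hIdef, Finset.card_image_of_injective _ (fun x y hxy => by simpa using hxy), noc_card]
    have := phi_eq w hw
    have := phi_pos (w-2)
    omega
  refine master w hw rank h00 G hGcard ?_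
  intro l hl
  rw [hGdef] at hl
  simp only [Finset.mem_insert] at hl
  rcases hl with rfl | rfl | hl
  · exact ⟨hlenA, hnoffA, hchA⟩
  · exact ⟨hlenB, hnoffB, hchB⟩
  · obtain ⟨-, -, hh⟩ := memI l hl
    exact hh

lemma scenario01 (w : ℕ) (hw : 2 ≤ w) (rank : List Bool → ℕ)
    (h00 : ∀ b : List Bool, b.length = 2 → rank [false, false] ≤ rank b)
    (h1 : rank [false, true] ≤ rank [true, false])
    (h2 : rank [false, true] ≤ rank [true, true]) :
    2 ^ w + 2 * phi (w-1) + 3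
      ≤ Nat.card {l : List Bool // l.length = w + 2 ∧ Charged rank w l} := by
  classical
  set I : Finset (List Bool) := (noc w).image (fun t => false :: true :: t) with hIdef
  set D : List Bool := mkW w (g01 w) with hDdef
  set R : List Bool := mkW w gRep with hRdef
  have hg0 : g01 w 0 = true := by simp [g01]; omega
  have hgw : g01 w w = false := by simp [g01]
  have hgw1 : g01 w (w+1) = true := by simp [g01]
  have memI : ∀ l ∈ I, l[0]? = some false ∧ l.length = w + 2 ∧ NoFF l ∧ Charged rank w l := by
    intro l hl
    simp only [hIdef, Finset.mem_image] at hl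
    obtain ⟨t, ht, rfl⟩ := hl
    obtain ⟨htl, htff⟩ := noc_spec w t ht
    have hff : NoFF (false :: true :: t) :=
      noFF_cons _ _ (noFF_cons _ _ htff (Or.inl rfl)) (Or.inr (fun h0 => by simp))
    refine ⟨by simp, by simp [htl], hff, ?_⟩
    refine charged_prefix (by simp [htl]) hff ?_
    rw [kmer0_cons]
    exact min3 rank [false, true] le_rfl h1 h2
  have hnoffD : NoFF D := by
    refine mkW_noFF w (g01 w) (fun j hj => ?_)
    by_cases hc : j < w
    · left; simp [g01, hc]
    · right
      have : j = w := by omega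
      subst this
      exact hgw1
  have hlenD : D.length = w + 2 := mkW_len w _
  have hkwD : kmerAt D w = [false, true] := by
    rw [hDdef, mkW_kmer w (g01 w) w le_rfl, hgw, hgw1]
  have hchD : Charged rank w D := by
    refine charged_suffix_min hlenD hnoffD ?_ ?_
    · rw [hkwD]; exact min3 rank [false, true] le_rfl h1 h2
    · intro i hi
      rw [hDdef, mkW_kmer w (g01 w) i (by omega), hkwD]
      simp [g01, hi]
  have hD0 : D[0]? = some true := by rw [hDdef, mkW_get? w _ 0 (by omega), hg0]
  have hDw : D[w]? = some false := by rw [hDdef, mkW_get? w _ w (by omega), hgw]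
  have hR0 : R[0]? = some true := by rw [hRdef, mkW_get? w _ 0 (by omega)]; rfl
  have hRw : R[w]? = some true := by rw [hRdef, mkW_get? w _ w (by omega)]; rfl
  have hdID : D ∉ I := fun h => by
    have := (memI D h).1
    rw [hD0] at this
    simp at this
  have hdIR : R ∉ I := fun h => by
    have := (memI R h).1
    rw [hR0] at this
    simp at this
  have hdDR : D ≠ R := fun h => by
    rw [h, hRw] at hDw
    simp at hDw
  set G : Finset (List Bool) := insert D (insert R I) with hGdef
  have hGcard : phi (w-1) + 3 ≤ G.card := by
    rw [hGdef, Finset.card_insert_of_notMem (by simp [hdID, hdDR]),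
      Finset.card_insert_of_notMem (by simp [hdIR]),
      hIdef, Finset.card_image_of_injective _ (fun x y hxy => by simpa using hxy), noc_card]
    have := phi_eq w hw
    have := phi_pos (w-2)
    omega
  refine master w hw rank h00 G hGcard ?_
  intro l hl
  rw [hGdef] at hl
  simp only [Finset.mem_insert] at hl
  rcases hl with rfl | rfl | hl
  · exact ⟨hlenD, hnoffD, hchD⟩
  · exact ⟨mkW_len w _, noFF_rep w, charged_rep rank w⟩
  · obtain ⟨-, hh⟩ := memI l hl
    exact hh

lemma scenario10 (w : ℕ) (hw : 2 ≤ w) (rank : List Bool → ℕ)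
    (h00 : ∀ b : List Bool, b.length = 2 → rank [false, false] ≤ rank b)
    (h1 : rank [true, false] ≤ rank [false, true])
    (h2 : rank [true, false] ≤ rank [true, true]) :
    2 ^ w + 2 * phi (w-1) + 3
      ≤ Nat.card {l : List Bool // l.length = w + 2 ∧ Charged rank w l} := by
  classical
  set I : Finset (List Bool) := (noc (w-1)).image (fun t => true :: false :: true :: t) with hIdef
  set E5 : List Bool := mkW w (g5 w) with hE5def
  set E6 : List Bool := mkW w (g6 w) with hE6def
  set R : List Bool := mkW w gRep with hRdef
  have hg5 : ∀ j ≤ w, g5 w j = true := fun j hj => by simp [g5, hj]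
  have hg5w1 : g5 w (w+1) = false := by simp [g5]
  have hg60 : g6 w 0 = false := by simp [g6]
  have hg6 : ∀ j, 1 ≤ j → j ≤ w → g6 w j = true := fun j hj1 hj2 => by
    simp [g6, hj2]
    omega
  have hg6w1 : g6 w (w+1) = false := by
    simp [g6]
  have memI : ∀ l ∈ I, l[0]? = some true ∧ l[1]? = some false ∧
      l.length = w + 2 ∧ NoFF l ∧ Charged rank w l := by
    intro l hl
    simp only [hIdef, Finset.mem_image] at hl
    obtain ⟨t, ht, rfl⟩ := hl
    obtain ⟨htl, htff⟩ := noc_spec (w-1) t ht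
    have hff : NoFF (true :: false :: true :: t) :=
      noFF_cons _ _ (noFF_cons _ _ (noFF_cons _ _ htff (Or.inl rfl))
        (Or.inr (fun h0 => by simp))) (Or.inl rfl)
    have hlen : (true :: false :: true :: t).length = w + 2 := by simp [htl]; omega
    refine ⟨by simp, by simp, hlen, hff, ?_⟩
    refine charged_prefix hlen hff ?_
    rw [kmer0_cons]
    exact min3 rank [true, false] h1 le_rfl h2
  have hnoffE5 : NoFF E5 := mkW_noFF w (g5 w) (fun j hj => Or.inl (hg5 j hj))
  have hlenE5 : E5.length = w + 2 := mkW_len w _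
  have hkwE5 : kmerAt E5 w = [true, false] := by
    rw [hE5def, mkW_kmer w (g5 w) w le_rfl, hg5 w le_rfl, hg5w1]
  have hchE5 : Charged rank w E5 := by
    refine charged_suffix_min hlenE5 hnoffE5 ?_ ?_
    · rw [hkwE5]; exact min3 rank [true, false] h1 le_rfl h2
    · intro i hi
      rw [hE5def, mkW_kmer w (g5 w) i (by omega), hkwE5, hg5 (i+1) (by omega)]
      simp
  have hnoffE6 : NoFF E6 := by
    refine mkW_noFF w (g6 w) (fun j hj => ?_)
    by_cases hc : j < w
    · exact Or.inr (hg6 (j+1) (by omega) (by omega))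
    · have hjw : j = w := by omega
      exact Or.inl (by rw [hjw]; exact hg6 w (by omega) le_rfl)
  have hlenE6 : E6.length = w + 2 := mkW_len w _
  have hkwE6 : kmerAt E6 w = [true, false] := by
    rw [hE6def, mkW_kmer w (g6 w) w le_rfl, hg6 w (by omega) le_rfl, hg6w1]
  have hchE6 : Charged rank w E6 := by
    refine charged_suffix_min hlenE6 hnoffE6 ?_ ?_
    · rw [hkwE6]; exact min3 rank [true, false] h1 le_rfl h2
    · intro i hi
      rw [hE6def, mkW_kmer w (g6 w) i (by omega), hkwE6, hg6 (i+1) (by omega) (by omega)]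
      simp
  -- distinguishing getElem? facts
  have hE50 : E5[0]? = some true := by rw [hE5def, mkW_get? w _ 0 (by omega), hg5 0 (by omega)]
  have hE51 : E5[1]? = some true := by rw [hE5def, mkW_get? w _ 1 (by omega), hg5 1 (by omega)]
  have hE5w1 : E5[w+1]? = some false := by rw [hE5def, mkW_get? w _ (w+1) (by omega), hg5w1]
  have hE60 : E6[0]? = some false := by rw [hE6def, mkW_get? w _ 0 (by omega), hg60]
  have hR0 : R[0]? = some true := by rw [hRdef, mkW_get? w _ 0 (by omega)]; rfl
  have hR1 : R[1]? = some true := by rw [hRdef, mkW_get? w _ 1 (by omega)]; rfl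
  have hRw1 : R[w+1]? = some true := by rw [hRdef, mkW_get? w _ (w+1) (by omega)]; rfl
  have hdIE5 : E5 ∉ I := fun h => by
    have := (memI E5 h).2.1
    rw [hE51] at this
    simp at this
  have hdIE6 : E6 ∉ I := fun h => by
    have := (memI E6 h).1
    rw [hE60] at this
    simp at this
  have hdIR : R ∉ I := fun h => by
    have := (memI R h).2.1
    rw [hR1] at this
    simp at this
  have hdE56 : E5 ≠ E6 := fun h => by
    rw [h, hE60] at hE50
    simp at hE50
  have hdE5R : E5 ≠ R := fun h => by
    rw [h, hRw1] at hE5w1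
    simp at hE5w1
  have hdE6R : E6 ≠ R := fun h => by
    rw [h, hR0] at hE60
    simp at hE60
  set G : Finset (List Bool) := insert E5 (insert E6 (insert R I)) with hGdef
  have hGcard : phi (w-1) + 3 ≤ G.card := by
    rw [hGdef, Finset.card_insert_of_notMem (by simp [hdIE5, hdE56, hdE5R]),
      Finset.card_insert_of_notMem (by simp [hdIE6, hdE6R]),
      Finset.card_insert_of_notMem (by simp [hdIR]),
      hIdef, Finset.card_image_of_injective _ (fun x y hxy => by simpa using hxy), noc_card]
  refine master w hw rank h00 G hGcard ?_
  intro l hl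
  rw [hGdef] at hl
  simp only [Finset.mem_insert] at hl
  rcases hl with rfl | rfl | rfl | hl
  · exact ⟨hlenE5, hnoffE5, hchE5⟩
  · exact ⟨hlenE6, hnoffE6, hchE6⟩
  · exact ⟨mkW_len w _, noFF_rep w, charged_rep rank w⟩
  · obtain ⟨-, -, hh⟩ := memI l hl
    exact hh

/-- For every linear order ρ on binary 2-mers with ρ[1] = 00 and every w ≥ 2, the number
of charged windows of length w+2 is at least 2^w + 2Φ_{w−1} + 3. -/
theorem stmt14 (w : ℕ) (hw : 2 ≤ w) (rank : List Bool → ℕ)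
    (hinj : ∀ a b : List Bool, a.length = 2 → b.length = 2 → rank a = rank b → a = b)
    (h00 : ∀ b : List Bool, b.length = 2 → rank [false, false] ≤ rank b) :
    2 ^ w + 2 * phi (w - 1) + 3
      ≤ Nat.card {l : List Bool // l.length = w + 2 ∧ Charged rank w l} := by
  rcases le_total (rank [true, true]) (rank [false, true]) with hA | hA
  · rcases le_total (rank [true, true]) (rank [true, false]) with hB | hB
    · exact scenario11 w hw rank h00 hA hB
    · exact scenario10 w hw rank h00 (le_trans hB hA) hB
  · rcases le_total (rank [false, true]) (rank [true, false]) with hB | hB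
    · exact scenario01 w hw rank h00 hB hA
    · exact scenario10 w hw rank h00 hB (le_trans hB hA)
end

section
/- For the binary alphabet and k ≥ 2, the number of binary strings of length n avoiding the k-mer 0^{k−1}1 equals the number of binary strings of length n avoiding the k-mer 01^{k−1}, for every n. -/
lemma aux_infix_map_rev (u l : List Bool) :
    u <:+: l ↔ (u.map not).reverse <:+: (l.map not).reverse := by
  rw [List.reverse_infix]
  constructor
  · exact fun h => h.map not
  · intro h
    have := h.map not
    simpa [List.map_map, Function.comp_def, Bool.not_not] using this

lemma aux_inv (l : List Bool) : ((l.map not).reverse.map not).reverse = l := by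
  simp [List.map_reverse, List.map_map, Function.comp_def, Bool.not_not]

/-- For the binary alphabet and k ≥ 2, the number of binary strings of length n avoiding
0^{k-1}1 equals the number avoiding 01^{k-1}, for every n. -/
theorem stmt17 (k n : ℕ) (hk : 2 ≤ k) :
    Nat.card {l : List Bool // l.length = n ∧
      ¬ (List.replicate (k - 1) false ++ [true]) <:+: l}
    = Nat.card {l : List Bool // l.length = n ∧
      ¬ (false :: List.replicate (k - 1) true) <:+: l} := by
  have hu : ((List.replicate (k - 1) false ++ [true]).map not).reverse
      = false :: List.replicate (k - 1) true := by
    simp [List.map_replicate]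
  apply Nat.card_congr
  refine ⟨fun ⟨l, hl, hinf⟩ => ⟨(l.map not).reverse, ?_, ?_⟩,
          fun ⟨l, hl, hinf⟩ => ⟨(l.map not).reverse, ?_, ?_⟩, ?_, ?_⟩
  · simpa using hl
  · intro h
    apply hinf
    rw [aux_infix_map_rev, hu]
    exact h
  · simpa using hl
  · intro h
    apply hinf
    have hu' : ((false :: List.replicate (k - 1) true).map not).reverse
        = List.replicate (k - 1) false ++ [true] := by
      simp [List.map_replicate]
    rw [aux_infix_map_rev, hu']
    exact h
  · rintro ⟨l, hl, hinf⟩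
    exact Subtype.ext (aux_inv l)
  · rintro ⟨l, hl, hinf⟩
    exact Subtype.ext (aux_inv l)
end
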